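/- arXiv:2003.08150 — 12 statements merged into one kernel-verified Lean document; each statement's English description precedes it below -/
import Mathlib

section
/- Let all parameters Π, β, r_Q, r_A, r_J, γ1, γ2, k1, k2, σ1, σ2, σ3, σ4, δ, μ be positive reals and p ∈ (0,1). Suppose S, E, Q, A, I, J, R : ℝ → ℝ are differentiable functions satisfying on [0, T] the system S' = Π − S(βI + r_QβQ + r_AβA + r_JβJ)/N − μS, E' = S(βI + r_QβQ + r_AβA + r_JβJ)/N − (γ1+k1+μ)E, Q' = γ1E − (k2+σ1+μ)Q, A' = p k1 E − (σ2+μ)A, I' = (1−p)k1E − (γ2+σ3+μ)I, J' = k2Q + γ2I − (δ+σ4+μ)J, R' = σ1Q + σ2A + σ3I + σ4J − μR, where N = S+E+Q+A+I+J+R is assumed positive on [0, T]. If S(0), E(0), Q(0), A(0), I(0), J(0), R(0) are all nonnegative, then S(t), E(t), Q(t), A(t), I(t), J(t), R(t) are nonnegative for all t ∈ [0, T]. -/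
/-!
Perturb the solution to `x i t + ε * exp ((K + 1) * t)`. If some perturbed component reached `0`,
then at the first such time `t₀` all components are `≥ -m` with `m = ε * exp ((K + 1) * t₀)` and
the touching one equals `-m`; the model's inflows are nonnegative combinations of compartments,
and the force of infection and `S / N` are bounded on the compact interval `[0, T]`, so the
touching component has derivative `≥ -K m`, making the perturbed one strictly increasing there,
which contradicts `t₀` being a first contact. Letting `ε → 0` gives nonnegativity.
-/

open Set Filter Topology

/-- A Nagumo-type quasi-positivity condition, made quantitative (rate `K m` on the faces of the
orthant shifted by `m`) so that it survives the perturbation by `ε * exp ((K + 1) * t)`. -/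
def LowerFaceDerivBound {ι : Type*} (x : ι → ℝ → ℝ) (T K : ℝ) : Prop :=
  ∀ t ∈ Icc 0 T, ∀ m > 0, (∀ j, -m ≤ x j t) → ∀ i, x i t = -m → -(K * m) ≤ deriv (x i) t

lemma eventually_pos_nhdsGT_of_deriv_pos {f : ℝ → ℝ} {t : ℝ} (hf : 0 < deriv f t)
    (ht : f t = 0) : ∀ᶠ z in 𝓝[>] t, 0 < f z := by
  filter_upwards [nhdsWithin_le_nhds (eventually_nhdsWithin_sign_eq_of_deriv_pos hf ht),
    self_mem_nhdsWithin] with z hz hzt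
  rwa [sign_pos (sub_pos.mpr hzt), sign_eq_one_iff] at hz

namespace LowerFaceDerivBound

variable {ι : Type*} [Finite ι] {x : ι → ℝ → ℝ} {T K : ℝ}

theorem add_exp_nonneg (hK : LowerFaceDerivBound x T K) (hx : ∀ i, Differentiable ℝ (x i))
    (h0 : ∀ i, 0 ≤ x i 0) {ε : ℝ} (hε : 0 < ε) :
    ∀ t ∈ Icc 0 T, ∀ i, 0 ≤ x i t + ε * Real.exp ((K + 1) * t) := by
  set y : ι → ℝ → ℝ := fun i t => x i t + ε * Real.exp ((K + 1) * t)
  have hy : ∀ i t,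
      HasDerivAt (y i) (deriv (x i) t + ε * (Real.exp ((K + 1) * t) * (K + 1))) t :=
    fun i t => (hx i t).hasDerivAt.add
      ((((hasDerivAt_id t).const_mul (K + 1)).exp).const_mul ε |>.congr_deriv (by simp))
  have hclosed : IsClosed ({t | ∀ i, 0 ≤ y i t} ∩ Icc 0 T) := by
    rw [ofPred_forall]
    exact (isClosed_iInter fun i => isClosed_le continuous_const
      (continuous_iff_continuousAt.2 fun t => (hy i t).continuousAt)).inter isClosed_Icc
  refine fun t ht i => hclosed.Icc_subset_of_forall_mem_nhdsWithin (fun i => ?_) ?_ ht i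
  · simp only [y, mul_zero, Real.exp_zero, mul_one]
    linarith [h0 i]
  rintro t ⟨hs, ht⟩
  refine eventually_all.2 fun i => ?_
  rcases (hs i).lt_or_eq with hpos | hzero
  · exact (((hy i t).continuousAt.eventually (eventually_gt_nhds hpos)).filter_mono
      nhdsWithin_le_nhds).mono fun _ => le_of_lt
  set m := ε * Real.exp ((K + 1) * t)
  have hm : 0 < m := by positivity
  have hderiv := hK t (Ico_subset_Icc_self ht) m hm (fun j => by linarith [hs j]) i
    (by linarith [hzero])
  have hy_deriv_pos : 0 < deriv (y i) t := by
    rw [(hy i t).deriv]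
    linarith
  exact (eventually_pos_nhdsGT_of_deriv_pos hy_deriv_pos hzero.symm).mono fun _ => le_of_lt

theorem nonneg (hK : LowerFaceDerivBound x T K) (hx : ∀ i, Differentiable ℝ (x i))
    (h0 : ∀ i, 0 ≤ x i 0) : ∀ t ∈ Icc 0 T, ∀ i, 0 ≤ x i t := by
  intro t ht i
  refine le_of_forall_pos_le_add fun δ hδ => ?_
  have hexp := Real.exp_pos ((K + 1) * t)
  simpa [div_mul_cancel₀ _ hexp.ne'] using hK.add_exp_nonneg hx h0 (div_pos hδ hexp) t ht i

end LowerFaceDerivBound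

lemma neg_mul_le_mul_of_neg_le {a y m : ℝ} (ha : 0 ≤ a) (hy : -m ≤ y) : -(a * m) ≤ a * y := by
  simpa using mul_le_mul_of_nonneg_left hy ha

lemma neg_mul_le_sub_mul {u a c x m K : ℝ} (hu : -(a * m) ≤ u) (hx : x = -m) (hc : 0 ≤ c)
    (hm : 0 ≤ m) (haK : a ≤ K) : -(K * m) ≤ u - c * x := by
  subst hx
  nlinarith [mul_le_mul_of_nonneg_right haK hm, mul_nonneg hc hm]

lemma neg_mul_le_sub_mul_div {π s l n m C : ℝ} (hπ : 0 ≤ π) (hs : s = -m) (hm : 0 ≤ m)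
    (hln : |l / n| ≤ C) : -(C * m) ≤ π - s * l / n := by
  subst hs
  have := mul_le_mul_of_nonneg_left (neg_le_of_abs_le hln) hm
  rw [neg_mul, neg_div, mul_div_assoc]
  linarith

lemma neg_mul_le_mul_div {s l n m c C : ℝ} (hn : 0 < n) (hm : 0 ≤ m) (hc : 0 ≤ c)
    (hs : -m ≤ s) (hl : -(c * m) ≤ l) (hsn : |s / n| ≤ C) (hln : |l / n| ≤ C) :
    -((c + 1) * C * m) ≤ s * l / n := by
  have hC : 0 ≤ C := (abs_nonneg _).trans hsn
  rcases le_or_gt 0 s with hs0 | hs0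
  · have hsn' : s / n ≤ C := (le_abs_self _).trans hsn
    calc -((c + 1) * C * m) ≤ s / n * -(c * m) := by
          nlinarith [div_nonneg hs0 hn.le, mul_nonneg hc hm, mul_nonneg hC hm]
      _ ≤ s / n * l := mul_le_mul_of_nonneg_left hl (div_nonneg hs0 hn.le)
      _ = s * l / n := by ring
  · calc -((c + 1) * C * m) ≤ s * (l / n) := by
          nlinarith [mul_nonneg hc hm, mul_nonneg hC hm, abs_le.mp hln]
      _ = s * l / n := by ring

theorem covid_lowerFaceDerivBound
    {Pi beta rQ rA rJ g1 g2 k1 k2 s1 s2 s3 s4 delta mu p T C : ℝ}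
    (hPi : 0 ≤ Pi) (hbeta : 0 ≤ beta) (hrQ : 0 ≤ rQ) (hrA : 0 ≤ rA) (hrJ : 0 ≤ rJ)
    (hg1 : 0 ≤ g1) (hg2 : 0 ≤ g2) (hk1 : 0 ≤ k1) (hk2 : 0 ≤ k2)
    (hs1 : 0 ≤ s1) (hs2 : 0 ≤ s2) (hs3 : 0 ≤ s3) (hs4 : 0 ≤ s4)
    (hdelta : 0 ≤ delta) (hmu : 0 ≤ mu) (hp0 : 0 ≤ p) (hp1 : p ≤ 1)
    {S E Q A I J R : ℝ → ℝ}
    (hNpos : ∀ t ∈ Icc (0 : ℝ) T, 0 < S t + E t + Q t + A t + I t + J t + R t)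
    (hSode : ∀ t ∈ Icc (0 : ℝ) T, deriv S t =
      Pi - S t * (beta * I t + rQ * beta * Q t + rA * beta * A t + rJ * beta * J t) /
        (S t + E t + Q t + A t + I t + J t + R t) - mu * S t)
    (hEode : ∀ t ∈ Icc (0 : ℝ) T, deriv E t =
      S t * (beta * I t + rQ * beta * Q t + rA * beta * A t + rJ * beta * J t) /
        (S t + E t + Q t + A t + I t + J t + R t) - (g1 + k1 + mu) * E t)
    (hQode : ∀ t ∈ Icc (0 : ℝ) T, deriv Q t = g1 * E t - (k2 + s1 + mu) * Q t)
    (hAode : ∀ t ∈ Icc (0 : ℝ) T, deriv A t = p * k1 * E t - (s2 + mu) * A t)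
    (hIode : ∀ t ∈ Icc (0 : ℝ) T, deriv I t =
      (1 - p) * k1 * E t - (g2 + s3 + mu) * I t)
    (hJode : ∀ t ∈ Icc (0 : ℝ) T, deriv J t =
      k2 * Q t + g2 * I t - (delta + s4 + mu) * J t)
    (hRode : ∀ t ∈ Icc (0 : ℝ) T, deriv R t =
      s1 * Q t + s2 * A t + s3 * I t + s4 * J t - mu * R t)
    (hC : ∀ t ∈ Icc (0 : ℝ) T,
      |S t / (S t + E t + Q t + A t + I t + J t + R t)| ≤ C ∧
      |(beta * I t + rQ * beta * Q t + rA * beta * A t + rJ * beta * J t) /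
        (S t + E t + Q t + A t + I t + J t + R t)| ≤ C) :
    LowerFaceDerivBound ![S, E, Q, A, I, J, R] T
      ((beta + rQ * beta + rA * beta + rJ * beta + 1) * C +
        g1 + k1 + k2 + g2 + s1 + s2 + s3 + s4) := by
  set Cβ := beta + rQ * beta + rA * beta + rJ * beta
  intro t ht m hm hall i hi
  obtain ⟨hSm, hEm, hQm, hAm, hIm, hJm, -⟩ : -m ≤ S t ∧ -m ≤ E t ∧ -m ≤ Q t ∧ -m ≤ A t ∧
      -m ≤ I t ∧ -m ≤ J t ∧ -m ≤ R t :=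
    ⟨hall 0, hall 1, hall 2, hall 3, hall 4, hall 5, hall 6⟩
  obtain ⟨hSN, hLN⟩ := hC t ht
  have hC0 : 0 ≤ C := (abs_nonneg _).trans hSN
  have hCβ : 0 ≤ Cβ := by positivity
  have hCβC : 0 ≤ Cβ * C := by positivity
  have hpk : p * k1 ≤ k1 := mul_le_of_le_one_left hk1 hp1
  have hpk0 : 0 ≤ p * k1 := by positivity
  have hL : -(Cβ * m) ≤ beta * I t + rQ * beta * Q t + rA * beta * A t + rJ * beta * J t := by
    linarith [neg_mul_le_mul_of_neg_le hbeta hIm,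
      neg_mul_le_mul_of_neg_le (mul_nonneg hrQ hbeta) hQm,
      neg_mul_le_mul_of_neg_le (mul_nonneg hrA hbeta) hAm,
      neg_mul_le_mul_of_neg_le (mul_nonneg hrJ hbeta) hJm]
  fin_cases i <;> simp only [Fin.zero_eta, Fin.mk_one, Fin.reduceFinMk, Matrix.cons_val] at hi ⊢
  · rw [hSode t ht]
    exact neg_mul_le_sub_mul (neg_mul_le_sub_mul_div hPi hi hm.le hLN) hi hmu hm.le
      (by linarith)
  · rw [hEode t ht]
    exact neg_mul_le_sub_mul (neg_mul_le_mul_div (hNpos t ht) hm.le hCβ hSm hL hSN hLN) hi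
      (by positivity) hm.le (by linarith)
  · rw [hQode t ht]
    exact neg_mul_le_sub_mul (neg_mul_le_mul_of_neg_le hg1 hEm) hi (by positivity) hm.le
      (by linarith)
  · rw [hAode t ht]
    exact neg_mul_le_sub_mul (neg_mul_le_mul_of_neg_le hpk0 hEm) hi (by positivity) hm.le
      (by linarith)
  · rw [hIode t ht]
    exact neg_mul_le_sub_mul (neg_mul_le_mul_of_neg_le (mul_nonneg (sub_nonneg.2 hp1) hk1) hEm) hi
      (by positivity) hm.le (by linarith)
  · rw [hJode t ht]
    refine neg_mul_le_sub_mul (a := k2 + g2) ?_ hi (by positivity) hm.le (by linarith)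
    linarith [neg_mul_le_mul_of_neg_le hk2 hQm, neg_mul_le_mul_of_neg_le hg2 hIm]
  · rw [hRode t ht]
    refine neg_mul_le_sub_mul (a := s1 + s2 + s3 + s4) ?_ hi hmu hm.le (by linarith)
    linarith [neg_mul_le_mul_of_neg_le hs1 hQm, neg_mul_le_mul_of_neg_le hs2 hAm,
      neg_mul_le_mul_of_neg_le hs3 hIm, neg_mul_le_mul_of_neg_le hs4 hJm]

/-- Nonnegativity (positivity) of solutions of the COVID-19 model (2.1) on [0, T]. -/
theorem stmt_0
    (Pi beta rQ rA rJ g1 g2 k1 k2 s1 s2 s3 s4 delta mu p T : ℝ)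
    (hPi : 0 < Pi) (hbeta : 0 < beta) (hrQ : 0 < rQ) (hrA : 0 < rA) (hrJ : 0 < rJ)
    (hg1 : 0 < g1) (hg2 : 0 < g2) (hk1 : 0 < k1) (hk2 : 0 < k2)
    (hs1 : 0 < s1) (hs2 : 0 < s2) (hs3 : 0 < s3) (hs4 : 0 < s4)
    (hdelta : 0 < delta) (hmu : 0 < mu) (hp0 : 0 < p) (hp1 : p < 1)
    (S E Q A I J R : ℝ → ℝ)
    (hS : Differentiable ℝ S) (hE : Differentiable ℝ E) (hQ : Differentiable ℝ Q)
    (hA : Differentiable ℝ A) (hI : Differentiable ℝ I) (hJ : Differentiable ℝ J)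
    (hR : Differentiable ℝ R)
    (hNpos : ∀ t ∈ Set.Icc (0 : ℝ) T,
      0 < S t + E t + Q t + A t + I t + J t + R t)
    (hSode : ∀ t ∈ Set.Icc (0 : ℝ) T, deriv S t =
      Pi - S t * (beta * I t + rQ * beta * Q t + rA * beta * A t + rJ * beta * J t) /
        (S t + E t + Q t + A t + I t + J t + R t) - mu * S t)
    (hEode : ∀ t ∈ Set.Icc (0 : ℝ) T, deriv E t =
      S t * (beta * I t + rQ * beta * Q t + rA * beta * A t + rJ * beta * J t) /
        (S t + E t + Q t + A t + I t + J t + R t) - (g1 + k1 + mu) * E t)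
    (hQode : ∀ t ∈ Set.Icc (0 : ℝ) T, deriv Q t = g1 * E t - (k2 + s1 + mu) * Q t)
    (hAode : ∀ t ∈ Set.Icc (0 : ℝ) T, deriv A t = p * k1 * E t - (s2 + mu) * A t)
    (hIode : ∀ t ∈ Set.Icc (0 : ℝ) T, deriv I t =
      (1 - p) * k1 * E t - (g2 + s3 + mu) * I t)
    (hJode : ∀ t ∈ Set.Icc (0 : ℝ) T, deriv J t =
      k2 * Q t + g2 * I t - (delta + s4 + mu) * J t)
    (hRode : ∀ t ∈ Set.Icc (0 : ℝ) T, deriv R t =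
      s1 * Q t + s2 * A t + s3 * I t + s4 * J t - mu * R t)
    (hS0 : 0 ≤ S 0) (hE0 : 0 ≤ E 0) (hQ0 : 0 ≤ Q 0) (hA0 : 0 ≤ A 0)
    (hI0 : 0 ≤ I 0) (hJ0 : 0 ≤ J 0) (hR0 : 0 ≤ R 0) :
    ∀ t ∈ Set.Icc (0 : ℝ) T,
      0 ≤ S t ∧ 0 ≤ E t ∧ 0 ≤ Q t ∧ 0 ≤ A t ∧ 0 ≤ I t ∧ 0 ≤ J t ∧ 0 ≤ R t := by
  set N := fun t => S t + E t + Q t + A t + I t + J t + R t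
  set L := fun t => beta * I t + rQ * beta * Q t + rA * beta * A t + rJ * beta * J t
  have hNc : ContinuousOn N (Icc 0 T) :=
    (by fun_prop : Differentiable ℝ N).continuous.continuousOn
  have hN0 : ∀ t ∈ Icc (0 : ℝ) T, N t ≠ 0 := fun t ht => (hNpos t ht).ne'
  obtain ⟨C, hC⟩ := isCompact_Icc.exists_bound_of_continuousOn
    ((hS.continuous.continuousOn.div hNc hN0).prodMk
      ((by fun_prop : Differentiable ℝ L).continuous.continuousOn.div hNc hN0))
  simp only [N, L, norm_prod_le_iff, _root_.Pi.div_apply, Real.norm_eq_abs] at hC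
  have hface := covid_lowerFaceDerivBound hPi.le hbeta.le hrQ.le hrA.le hrJ.le hg1.le hg2.le
    hk1.le hk2.le hs1.le hs2.le hs3.le hs4.le hdelta.le hmu.le hp0.le hp1.le
    hNpos hSode hEode hQode hAode hIode hJode hRode hC
  intro t ht
  have h := hface.nonneg (fun i => by fin_cases i <;> assumption)
    (fun i => by fin_cases i <;> assumption) t ht
  exact ⟨h 0, h 1, h 2, h 3, h 4, h 5, h 6⟩
end

section
/- Let all parameters be positive reals with p ∈ (0,1), and set m1 = γ1+k1+μ, m2 = k2+σ1+μ, m3 = σ2+μ, m4 = γ2+σ3+μ, m5 = δ+σ4+μ. Let F be the 5×5 real matrix whose first row is (0, r_Qβ, r_Aβ, β, r_Jβ) and all other rows zero, and let V be the 5×5 matrix with rows (m1, 0, 0, 0, 0), (−γ1, m2, 0, 0, 0), (−p k1, 0, m3, 0, 0), (−(1−p)k1, 0, 0, m4, 0), (0, −k2, 0, −γ2, m5). Then V is invertible and the spectral radius of F V⁻¹ equals R_c := r_Qβγ1/(m1 m2) + r_Aβ p k1/(m1 m3) + β k1(1−p)/(m1 m4) + r_Jβγ1 k2/(m1 m2 m5)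 + r_Jβ(1−p)k1γ2/(m1 m4 m5). -/
/-!
`F = e₀ fᵀ` has rank one, hence so does the next-generation matrix: `F V⁻¹ = e₀ wᵀ` with
`w = fᵀ V⁻¹`, obtained from the lower triangular `V` by back substitution. A rank-one matrix
`P = u wᵀ` satisfies `P² = (w ⬝ᵥ u) P`, so its spectrum lies in `{0, w ⬝ᵥ u}` and contains
`w ⬝ᵥ u` as soon as `P ≠ 0`. Here `w ⬝ᵥ e₀ = w₀ = R_c > 0`.
-/

open Matrix Polynomial

namespace spectrum

variable {𝕜 A : Type*} [Ring A] {a : A}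

section Field

variable [Field 𝕜] [Algebra 𝕜 A] {c : 𝕜}

theorem subset_pair_of_mul_self_eq_smul [Nontrivial A] (h : a * a = c • a) :
    spectrum 𝕜 a ⊆ {0, c} := by
  intro z hz
  have hann : aeval a (X ^ 2 - C c * X) = 0 := by
    simp [sq, h, Algebra.smul_def]
  have hroot := subset_polynomial_aeval a (X ^ 2 - C c * X) ⟨z, hz, rfl⟩
  rw [hann, zero_eq, Set.mem_singleton_iff] at hroot
  have hz : z * (z - c) = 0 := by
    simp only [eval_sub, eval_mul, eval_pow, eval_X, eval_C] at hroot
    linear_combination hroot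
  simpa [sub_eq_zero] using hz

theorem mem_of_mul_self_eq_smul (h : a * a = c • a) (ha : a ≠ 0) : c ∈ spectrum 𝕜 a := by
  intro hunit
  refine ha (hunit.mul_right_eq_zero.mp ?_)
  rw [sub_mul, h, Algebra.algebraMap_eq_smul_one, smul_one_mul, sub_self]

end Field

theorem norm_le_of_mul_self_eq_smul [NormedField 𝕜] [Algebra 𝕜 A] [Nontrivial A]
    {c : 𝕜} (h : a * a = c • a) {z : 𝕜} (hz : z ∈ spectrum 𝕜 a) : ‖z‖ ≤ ‖c‖ := by
  rcases subset_pair_of_mul_self_eq_smul h hz with rfl | rfl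
  · simp
  · rfl

end spectrum

namespace Matrix

variable {n : Type*} [Fintype n]

theorem vecMulVec_mul_self {α : Type*} [CommSemiring α] (u v : n → α) :
    vecMulVec u v * vecMulVec u v = (v ⬝ᵥ u) • vecMulVec u v := by
  rw [vecMulVec_mul_vecMulVec, vecMulVec_smul]

theorem vecMulVec_mul_nonsing_inv {α : Type*} [DecidableEq n] [CommRing α] {V : Matrix n n α}
    (hV : IsUnit V.det) (u : n → α) {f w : n → α} (hw : w ᵥ* V = f) :
    vecMulVec u f * V⁻¹ = vecMulVec u w := by
  rw [vecMulVec_mul, ← hw, vecMul_vecMul, mul_nonsing_inv V hV, vecMul_one]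

theorem map_mul_self_eq_smul {R S : Type*} [CommSemiring R] [CommSemiring S] (f : R →+* S)
    {P : Matrix n n R} {c : R} (h : P * P = c • P) : P.map f * P.map f = f c • P.map f := by
  rw [← Matrix.map_mul, h, Matrix.map_smul' _ _ _ (map_mul f)]

theorem isUnit_det_of_isLowerTriangular {K : Type*} [Field K] [LinearOrder n] {M : Matrix n n K}
    (h : M.IsLowerTriangular) (hdiag : ∀ i, M i i ≠ 0) : IsUnit M.det := by
  rw [det_of_isLowerTriangular M h]
  exact (Finset.prod_ne_zero_iff.mpr fun i _ => hdiag i).isUnit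

end Matrix

/-- The control reproduction number R_c is the spectral radius of the
next-generation matrix F V⁻¹: V is invertible, R_c is an eigenvalue of F V⁻¹,
and every (complex) eigenvalue of F V⁻¹ has modulus at most R_c. -/
theorem stmt_2
    (beta rQ rA rJ g1 g2 k1 k2 s1 s2 s3 s4 delta mu p : ℝ)
    (hbeta : 0 < beta) (hrQ : 0 < rQ) (hrA : 0 < rA) (hrJ : 0 < rJ)
    (hg1 : 0 < g1) (hg2 : 0 < g2) (hk1 : 0 < k1) (hk2 : 0 < k2)
    (hs1 : 0 < s1) (hs2 : 0 < s2) (hs3 : 0 < s3) (hs4 : 0 < s4)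
    (hdelta : 0 < delta) (hmu : 0 < mu) (hp0 : 0 < p) (hp1 : p < 1)
    (m1 m2 m3 m4 m5 : ℝ)
    (hm1 : m1 = g1 + k1 + mu) (hm2 : m2 = k2 + s1 + mu) (hm3 : m3 = s2 + mu)
    (hm4 : m4 = g2 + s3 + mu) (hm5 : m5 = delta + s4 + mu)
    (F V : Matrix (Fin 5) (Fin 5) ℝ)
    (hF : F = !![0, rQ * beta, rA * beta, beta, rJ * beta;
                 0, 0, 0, 0, 0;
                 0, 0, 0, 0, 0;
                 0, 0, 0, 0, 0;
                 0, 0, 0, 0, 0])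
    (hV : V = !![m1, 0, 0, 0, 0;
                 -g1, m2, 0, 0, 0;
                 -(p * k1), 0, m3, 0, 0;
                 -((1 - p) * k1), 0, 0, m4, 0;
                 0, -k2, 0, -g2, m5])
    (Rc : ℝ)
    (hRc : Rc = rQ * beta * g1 / (m1 * m2) + rA * beta * p * k1 / (m1 * m3)
      + beta * k1 * (1 - p) / (m1 * m4)
      + rJ * beta * g1 * k2 / (m1 * m2 * m5)
      + rJ * beta * (1 - p) * k1 * g2 / (m1 * m4 * m5)) :
    IsUnit V ∧
      (Rc : ℂ) ∈ spectrum ℂ ((F * V⁻¹).map Complex.ofReal) ∧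
      ∀ z ∈ spectrum ℂ ((F * V⁻¹).map Complex.ofReal), ‖z‖ ≤ Rc := by
  have hm1p : 0 < m1 := by rw [hm1]; positivity
  have hm2p : 0 < m2 := by rw [hm2]; positivity
  have hm3p : 0 < m3 := by rw [hm3]; positivity
  have hm4p : 0 < m4 := by rw [hm4]; positivity
  have hm5p : 0 < m5 := by rw [hm5]; positivity
  have hq : 0 < 1 - p := by linarith
  have hRc_pos : 0 < Rc := by rw [hRc]; positivity
  have hV_det : IsUnit V.det := by
    refine isUnit_det_of_isLowerTriangular (fun i j hij => ?_) (fun i => ?_) <;> rw [hV]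
    · rw [OrderDual.toDual_lt_toDual] at hij
      fin_cases i <;> fin_cases j <;> simp at hij ⊢
    · fin_cases i <;> simp [hm1p.ne', hm2p.ne', hm3p.ne', hm4p.ne', hm5p.ne']
  have hF_rank_one : F = vecMulVec (Pi.single 0 1) ![0, rQ * beta, rA * beta, beta, rJ * beta] := by
    rw [hF]; ext i j; fin_cases i <;> fin_cases j <;> simp [vecMulVec_apply]
  set w : Fin 5 → ℝ := ![Rc, (rQ * beta + k2 * (rJ * beta / m5)) / m2, rA * beta / m3,
    (beta + g2 * (rJ * beta / m5)) / m4, rJ * beta / m5] with hw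
  have hwV : w ᵥ* V = ![0, rQ * beta, rA * beta, beta, rJ * beta] := by
    rw [hV]; ext j
    fin_cases j <;> simp [vecMul, dotProduct, Fin.sum_univ_five, hw, hRc] <;> field_simp <;> ring
  have hP : F * V⁻¹ = vecMulVec (Pi.single 0 1) w := by
    rw [hF_rank_one, vecMulVec_mul_nonsing_inv hV_det _ hwV]
  have hP_sq : F * V⁻¹ * (F * V⁻¹) = Rc • (F * V⁻¹) := by
    rw [hP, vecMulVec_mul_self, dotProduct_single_one]
    rfl
  have hN_sq := map_mul_self_eq_smul Complex.ofRealHom hP_sq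
  have hN_ne : (F * V⁻¹).map Complex.ofRealHom ≠ 0 := fun h => by
    simpa [hP, hw, hRc_pos.ne'] using congrFun (congrFun h 0) 0
  refine ⟨(isUnit_iff_isUnit_det V).mpr hV_det, spectrum.mem_of_mul_self_eq_smul hN_sq hN_ne,
    fun z hz => ?_⟩
  simpa [abs_of_pos hRc_pos] using spectrum.norm_le_of_mul_self_eq_smul hN_sq hz
end

section
/- Let all parameters be positive reals with p ∈ (0,1), and define m1 = γ1+k1+μ, m2 = k2+σ1+μ, m3 = σ2+μ, m4 = γ2+σ3+μ, m5 = δ+σ4+μ. Let J₀ be the 7×7 real matrix with rows (−μ, 0, −r_Qβ, −r_Aβ, −β, −r_Jβ, 0), (0, −m1, r_Qβ, r_Aβ, β, r_Jβ, 0), (0, γ1, −m2, 0, 0, 0, 0), (0, p k1, 0, −m3, 0, 0, 0), (0, (1−p)k1, 0, 0, −m4, 0, 0), (0, 0, k2, 0, γ2, −m5, 0), (0, 0, σ1, σ2, σ3, σ4, −μ). If R_c < 1, then every complex eigenvalue λ of J₀ satisfies Re(λ) < 0. -/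
/-!
Weighted diagonal dominance: if `d > 0` and `∑_{j ≠ i} |J i j| d j < -J i i d i` for every row,
then for `Re z ≥ 0` the matrix `(z - J) · diag d` is strictly row diagonally dominant, hence
invertible by Gershgorin's theorem. For `J₀`, columns 0 and 6 vanish off the diagonal, so the
weights of rows 0 and 6 can simply be taken large. The weights solving rows 2–5 with equality turn
row 1 into `m1 (R_c - 1) < 0`; perturbing them by a small `ε > 0` makes every row strict.
-/

open Finset Matrix

theorem Matrix.re_lt_zero_of_mem_spectrum_of_weighted_row_dominant {n : Type*} [Fintype n]
    [DecidableEq n] {M : Matrix n n ℝ} {d : n → ℝ} (hd : ∀ i, 0 < d i)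
    (hM : ∀ i, ∑ j ∈ univ.erase i, |M i j| * d j < -(M i i * d i))
    {z : ℂ} (hz : z ∈ spectrum ℂ (M.map Complex.ofReal)) : z.re < 0 := by
  by_contra! hre
  set A : Matrix n n ℂ := (algebraMap ℂ _ z - M.map Complex.ofReal) * diagonal fun i ↦ (d i : ℂ)
  have hA : ∀ i j, A i j = ((if i = j then z else 0) - M i j) * d j := by
    intro i j
    simp [A, Algebra.algebraMap_eq_smul_one, one_apply]
  have hdet : A.det ≠ 0 := by
    refine det_ne_zero_of_sum_row_lt_diag fun i ↦ ?_
    have hoff : ∀ j ∈ univ.erase i, ‖A i j‖ = |M i j| * d j := fun j hj ↦ by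
      simp [hA, (ne_of_mem_erase hj).symm, abs_of_pos (hd j)]
    have hdiag : -(M i i * d i) ≤ ‖A i i‖ := by
      have hre' : -M i i ≤ ‖z - M i i‖ := by
        have := Complex.re_le_norm (z - M i i)
        rw [Complex.sub_re, Complex.ofReal_re] at this
        linarith
      rw [hA, if_pos rfl, norm_mul, Complex.norm_real, Real.norm_of_nonneg (hd i).le, ← neg_mul]
      exact mul_le_mul_of_nonneg_right hre' (hd i).le
    rw [sum_congr rfl hoff]
    exact (hM i).trans_le hdiag
  rw [spectrum.mem_iff, isUnit_iff_isUnit_det, isUnit_iff_ne_zero, not_not] at hz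
  exact hdet (by rw [det_mul, hz, zero_mul])

def dfeJacobian (beta rQ rA rJ g1 g2 k1 k2 s1 s2 s3 s4 mu p m1 m2 m3 m4 m5 : ℝ) :
    Matrix (Fin 7) (Fin 7) ℝ :=
  !![-mu, 0, -(rQ * beta), -(rA * beta), -beta, -(rJ * beta), 0;
     0, -m1, rQ * beta, rA * beta, beta, rJ * beta, 0;
     0, g1, -m2, 0, 0, 0, 0;
     0, p * k1, 0, -m3, 0, 0, 0;
     0, (1 - p) * k1, 0, 0, -m4, 0, 0;
     0, 0, k2, 0, g2, -m5, 0;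
     0, 0, s1, s2, s3, s4, -mu]

theorem lt_mul_div_add_of_pos {a m ε : ℝ} (hm : 0 < m) (hε : 0 < ε) : a < m * (a / m + ε) := by
  rw [mul_add, mul_div_cancel₀ _ hm.ne']
  exact lt_add_of_pos_right _ (mul_pos hm hε)

section

variable {beta rQ rA rJ g1 g2 k1 k2 s1 s2 s3 s4 mu p m1 m2 m3 m4 m5 : ℝ}

theorem dfeJacobian_re_lt_zero_of_weights (hbeta : 0 ≤ beta) (hrQ : 0 ≤ rQ) (hrA : 0 ≤ rA)
    (hrJ : 0 ≤ rJ) (hg1 : 0 ≤ g1) (hg2 : 0 ≤ g2) (hk1 : 0 ≤ k1) (hk2 : 0 ≤ k2) (hp0 : 0 ≤ p)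
    (hp1 : p ≤ 1) (hmu : 0 < mu) (hm1 : 0 < m1) {w2 w3 w4 w5 : ℝ} (hw2 : 0 < w2) (hw3 : 0 < w3)
    (hw4 : 0 < w4) (hw5 : 0 < w5) (row1 : beta * (rQ * w2 + rA * w3 + w4 + rJ * w5) < m1)
    (row2 : g1 < m2 * w2) (row3 : p * k1 < m3 * w3) (row4 : (1 - p) * k1 < m4 * w4)
    (row5 : k2 * w2 + g2 * w4 < m5 * w5) {z : ℂ}
    (hz : z ∈ spectrum ℂ ((dfeJacobian beta rQ rA rJ g1 g2 k1 k2 s1 s2 s3 s4 mu p m1 m2 m3 m4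
      m5).map Complex.ofReal)) :
    z.re < 0 := by
  set S := |s1| * w2 + |s2| * w3 + |s3| * w4 + |s4| * w5
  have hq : 0 ≤ 1 - p := sub_nonneg.2 hp1
  refine re_lt_zero_of_mem_spectrum_of_weighted_row_dominant
    (d := ![m1 / mu, 1, w2, w3, w4, w5, S / mu + 1]) (fun i ↦ ?_) (fun i ↦ ?_) hz
  · fin_cases i <;> simp <;> positivity
  · fin_cases i <;> simp [dfeJacobian, sum_erase_eq_sub, Fin.sum_univ_seven, abs_of_nonneg,
      abs_of_pos, mul_div_cancel₀, hmu.ne', *]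
    · linarith
    · linarith
    · rw [mul_add, mul_div_cancel₀ _ hmu.ne']
      linarith

open Filter Topology in
theorem exists_dfeJacobian_weights_of_lt_one (hg1 : 0 ≤ g1) (hg2 : 0 ≤ g2) (hk1 : 0 ≤ k1) (hk2 : 0 ≤ k2)
    (hp0 : 0 ≤ p) (hp1 : p ≤ 1) (hm1 : 0 < m1) (hm2 : 0 < m2) (hm3 : 0 < m3) (hm4 : 0 < m4)
    (hm5 : 0 < m5)
    (hRc : rQ * beta * g1 / (m1 * m2) + rA * beta * p * k1 / (m1 * m3)
      + beta * k1 * (1 - p) / (m1 * m4)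
      + rJ * beta * g1 * k2 / (m1 * m2 * m5)
      + rJ * beta * (1 - p) * k1 * g2 / (m1 * m4 * m5) < 1) :
    ∃ w2 w3 w4 w5 : ℝ, 0 < w2 ∧ 0 < w3 ∧ 0 < w4 ∧ 0 < w5 ∧
      beta * (rQ * w2 + rA * w3 + w4 + rJ * w5) < m1 ∧ g1 < m2 * w2 ∧ p * k1 < m3 * w3 ∧
      (1 - p) * k1 < m4 * w4 ∧ k2 * w2 + g2 * w4 < m5 * w5 := by
  set u2 := g1 / m2
  set u3 := p * k1 / m3
  set u4 := (1 - p) * k1 / m4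
  set w5 : ℝ → ℝ := fun ε ↦ (k2 * (u2 + ε) + g2 * (u4 + ε)) / m5 + ε
  set S : ℝ → ℝ := fun ε ↦ beta * (rQ * (u2 + ε) + rA * (u3 + ε) + (u4 + ε) + rJ * w5 ε)
  have hS0 : S 0 < m1 := by
    have : S 0 = m1 * (rQ * beta * g1 / (m1 * m2) + rA * beta * p * k1 / (m1 * m3)
      + beta * k1 * (1 - p) / (m1 * m4)
      + rJ * beta * g1 * k2 / (m1 * m2 * m5)
      + rJ * beta * (1 - p) * k1 * g2 / (m1 * m4 * m5)) := by
      simp only [S, w5, u2, u3, u4]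
      field_simp
      ring
    rw [this]
    exact mul_lt_of_lt_one_right hm1 hRc
  have hS : ∀ᶠ ε in 𝓝[>] 0, S ε < m1 :=
    nhdsWithin_le_nhds <| (show Continuous S by fun_prop).continuousAt.eventually_lt
      continuousAt_const hS0
  obtain ⟨ε, hSε, hε⟩ : ∃ ε, S ε < m1 ∧ 0 < ε := (hS.and self_mem_nhdsWithin).exists
  have hu2 : 0 ≤ u2 := by positivity
  have hu3 : 0 ≤ u3 := by positivity
  have hu4 : 0 ≤ u4 := div_nonneg (mul_nonneg (sub_nonneg.2 hp1) hk1) hm4.le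
  refine ⟨u2 + ε, u3 + ε, u4 + ε, w5 ε, by positivity, by positivity, by positivity,
    by positivity, hSε, ?_, ?_, ?_, ?_⟩
  · exact lt_mul_div_add_of_pos hm2 hε
  · exact lt_mul_div_add_of_pos hm3 hε
  · exact lt_mul_div_add_of_pos hm4 hε
  · exact lt_mul_div_add_of_pos hm5 hε

end

/-- Local asymptotic stability of the DFE: if R_c < 1, every complex eigenvalue
of the Jacobian J₀ of model (2.1) at the disease-free equilibrium has negative
real part. -/
theorem stmt_3
    (beta rQ rA rJ g1 g2 k1 k2 s1 s2 s3 s4 delta mu p : ℝ)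
    (hbeta : 0 < beta) (hrQ : 0 < rQ) (hrA : 0 < rA) (hrJ : 0 < rJ)
    (hg1 : 0 < g1) (hg2 : 0 < g2) (hk1 : 0 < k1) (hk2 : 0 < k2)
    (hs1 : 0 < s1) (hs2 : 0 < s2) (hs3 : 0 < s3) (hs4 : 0 < s4)
    (hdelta : 0 < delta) (hmu : 0 < mu) (hp0 : 0 < p) (hp1 : p < 1)
    (m1 m2 m3 m4 m5 : ℝ)
    (hm1 : m1 = g1 + k1 + mu) (hm2 : m2 = k2 + s1 + mu) (hm3 : m3 = s2 + mu)
    (hm4 : m4 = g2 + s3 + mu) (hm5 : m5 = delta + s4 + mu)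
    (J0 : Matrix (Fin 7) (Fin 7) ℝ)
    (hJ0 : J0 = !![-mu, 0, -(rQ * beta), -(rA * beta), -beta, -(rJ * beta), 0;
                   0, -m1, rQ * beta, rA * beta, beta, rJ * beta, 0;
                   0, g1, -m2, 0, 0, 0, 0;
                   0, p * k1, 0, -m3, 0, 0, 0;
                   0, (1 - p) * k1, 0, 0, -m4, 0, 0;
                   0, 0, k2, 0, g2, -m5, 0;
                   0, 0, s1, s2, s3, s4, -mu])
    (Rc : ℝ)
    (hRc : Rc = rQ * beta * g1 / (m1 * m2) + rA * beta * p * k1 / (m1 * m3)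
      + beta * k1 * (1 - p) / (m1 * m4)
      + rJ * beta * g1 * k2 / (m1 * m2 * m5)
      + rJ * beta * (1 - p) * k1 * g2 / (m1 * m4 * m5))
    (hRclt : Rc < 1) :
    ∀ z ∈ spectrum ℂ (J0.map Complex.ofReal), z.re < 0 := by
  have hm1p : 0 < m1 := by rw [hm1]; positivity
  have hm2p : 0 < m2 := by rw [hm2]; positivity
  have hm3p : 0 < m3 := by rw [hm3]; positivity
  have hm4p : 0 < m4 := by rw [hm4]; positivity
  have hm5p : 0 < m5 := by rw [hm5]; positivity
  obtain ⟨w2, w3, w4, w5, hw2, hw3, hw4, hw5, row1, row2, row3, row4, row5⟩ :=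
    exists_dfeJacobian_weights_of_lt_one hg1.le hg2.le hk1.le hk2.le hp0.le hp1.le hm1p hm2p hm3p hm4p hm5p
      (hRc ▸ hRclt)
  subst hJ0
  intro z hz
  exact dfeJacobian_re_lt_zero_of_weights hbeta.le hrQ.le hrA.le hrJ.le hg1.le hg2.le hk1.le
    hk2.le hp0.le hp1.le hmu hm1p hw2 hw3 hw4 hw5 row1 row2 row3 row4 row5 hz
end

section
/- Let all parameters be positive reals with p ∈ (0,1), and define m1 = γ1+k1+μ, m2 = k2+σ1+μ, m3 = σ2+μ, m4 = γ2+σ3+μ, m5 = δ+σ4+μ. For λ ∈ ℂ with λ ∉ {−m1, −m2, −m3, −m4, −m5}, define G₁(λ) = r_Qβγ1/((λ+m1)(λ+m2)) + r_Aβ p k1/((λ+m1)(λ+m3)) + β k1(1−p)/((λ+m1)(λ+m4)) + r_Jβγ1k2/((λ+m1)(λ+m2)(λ+m5)) + r_Jβ(1−p)k1γ2/((λ+m1)(λ+m4)(λ+m5)). Then for every λ ∈ ℂ with Re(λ) ≥ 0 one has |G₁(λ)| ≤ G₁(0) = R_c. -/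
/-! Every term of `G₁` is a nonnegative constant divided by a product of factors `λ + mᵢ` with
`mᵢ > 0`. For `Re λ ≥ 0` each factor satisfies `mᵢ ≤ Re (λ + mᵢ) ≤ ‖λ + mᵢ‖`, so termwise the modulus
is at most the value at `λ = 0`, and the triangle inequality gives `‖G₁ λ‖ ≤ G₁ 0 = R_c`. -/

namespace Complex

lemma le_norm_add_ofReal {l : ℂ} (hl : 0 ≤ l.re) (m : ℝ) : m ≤ ‖l + m‖ :=
  calc m ≤ (l + m).re := by simpa using hl
    _ ≤ ‖l + m‖ := re_le_norm _

lemma add_ofReal_ne_zero {l : ℂ} (hl : 0 ≤ l.re) {m : ℝ} (hm : 0 < m) : l + m ≠ 0 :=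
  norm_pos_iff.mp (hm.trans_le (le_norm_add_ofReal hl m))

lemma norm_ofReal_div_le {c a : ℝ} (hc : 0 ≤ c) (ha : 0 < a) {z : ℂ} (hz : a ≤ ‖z‖) :
    ‖(c : ℂ) / z‖ ≤ c / a := by
  rw [norm_div, Complex.norm_of_nonneg hc]
  gcongr

end Complex

open Complex in
/-- For G₁ as in the stability proof for the DFE of model (2.1): for every λ ∈ ℂ
with Re(λ) ≥ 0 one has |G₁(λ)| ≤ G₁(0) = R_c. -/
theorem stmt_5
    (beta rQ rA rJ g1 g2 k1 k2 s1 s2 s3 s4 delta mu p : ℝ)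
    (hbeta : 0 < beta) (hrQ : 0 < rQ) (hrA : 0 < rA) (hrJ : 0 < rJ)
    (hg1 : 0 < g1) (hg2 : 0 < g2) (hk1 : 0 < k1) (hk2 : 0 < k2)
    (hs1 : 0 < s1) (hs2 : 0 < s2) (hs3 : 0 < s3) (hs4 : 0 < s4)
    (hdelta : 0 < delta) (hmu : 0 < mu) (hp0 : 0 < p) (hp1 : p < 1)
    (m1 m2 m3 m4 m5 : ℝ)
    (hm1 : m1 = g1 + k1 + mu) (hm2 : m2 = k2 + s1 + mu) (hm3 : m3 = s2 + mu)
    (hm4 : m4 = g2 + s3 + mu) (hm5 : m5 = delta + s4 + mu)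
    (G1 : ℂ → ℂ)
    (hG1 : ∀ l : ℂ,
      l ∉ ({-(m1 : ℂ), -(m2 : ℂ), -(m3 : ℂ), -(m4 : ℂ), -(m5 : ℂ)} : Set ℂ) →
      G1 l = (↑(rQ * beta * g1) : ℂ) / ((l + (m1 : ℂ)) * (l + (m2 : ℂ)))
        + (↑(rA * beta * p * k1) : ℂ) / ((l + (m1 : ℂ)) * (l + (m3 : ℂ)))
        + (↑(beta * k1 * (1 - p)) : ℂ) / ((l + (m1 : ℂ)) * (l + (m4 : ℂ)))
        + (↑(rJ * beta * g1 * k2) : ℂ) /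
            ((l + (m1 : ℂ)) * (l + (m2 : ℂ)) * (l + (m5 : ℂ)))
        + (↑(rJ * beta * (1 - p) * k1 * g2) : ℂ) /
            ((l + (m1 : ℂ)) * (l + (m4 : ℂ)) * (l + (m5 : ℂ))))
    (Rc : ℝ)
    (hRc : Rc = rQ * beta * g1 / (m1 * m2) + rA * beta * p * k1 / (m1 * m3)
      + beta * k1 * (1 - p) / (m1 * m4)
      + rJ * beta * g1 * k2 / (m1 * m2 * m5)
      + rJ * beta * (1 - p) * k1 * g2 / (m1 * m4 * m5)) :
    G1 0 = (Rc : ℂ) ∧ ∀ l : ℂ, 0 ≤ l.re → ‖G1 l‖ ≤ Rc := by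
  have hM1 : 0 < m1 := by linarith
  have hM2 : 0 < m2 := by linarith
  have hM3 : 0 < m3 := by linarith
  have hM4 : 0 < m4 := by linarith
  have hM5 : 0 < m5 := by linarith
  have hq : 0 < 1 - p := by linarith
  have hdom : ∀ l : ℂ, 0 ≤ l.re →
      l ∉ ({-(m1 : ℂ), -(m2 : ℂ), -(m3 : ℂ), -(m4 : ℂ), -(m5 : ℂ)} : Set ℂ) := by
    intro l hl
    simp only [Set.mem_insert_iff, Set.mem_singleton_iff, ← add_eq_zero_iff_eq_neg, not_or]
    exact ⟨add_ofReal_ne_zero hl hM1, add_ofReal_ne_zero hl hM2, add_ofReal_ne_zero hl hM3,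
      add_ofReal_ne_zero hl hM4, add_ofReal_ne_zero hl hM5⟩
  refine ⟨?_, fun l hl => ?_⟩
  · rw [hG1 0 (hdom 0 le_rfl), hRc]
    push_cast
    ring
  rw [hG1 l (hdom l hl), hRc]
  have h1 := le_norm_add_ofReal hl m1
  have h2 := le_norm_add_ofReal hl m2
  have h3 := le_norm_add_ofReal hl m3
  have h4 := le_norm_add_ofReal hl m4
  have h5 := le_norm_add_ofReal hl m5
  grw [norm_add_le, norm_add_le, norm_add_le, norm_add_le]
  gcongr ?_ + ?_ + ?_ + ?_ + ?_
  all_goals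
    refine norm_ofReal_div_le (by positivity) (by positivity) ?_
    simp only [norm_mul]
    gcongr
end

section
/- Let all parameters be positive reals with p ∈ (0,1), and define m1 = γ1+k1+μ, m2 = k2+σ1+μ, m3 = σ2+μ, m4 = γ2+σ3+μ, m5 = δ+σ4+μ. For real λ ≥ 0 define G₁(λ) = r_Qβγ1/((λ+m1)(λ+m2)) + r_Aβ p k1/((λ+m1)(λ+m3)) + β k1(1−p)/((λ+m1)(λ+m4)) + r_Jβγ1k2/((λ+m1)(λ+m2)(λ+m5)) + r_Jβ(1−p)k1γ2/((λ+m1)(λ+m4)(λ+m5)). If R_c = G₁(0) > 1, then there exists λ* > 0 with G₁(λ*) = 1. -/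
/-! Every term of `G₁` has `λ + m₁` in its denominator and its other factors only grow with `λ`,
so `G₁ λ ≤ G₁ 0 · m₁ / (λ + m₁)`. At `λ = m₁ R_c` this bound is `R_c / (R_c + 1) < 1`, and since
`G₁` is continuous on `[0, ∞)` with `G₁ 0 = R_c > 1`, the intermediate value theorem gives the root. -/

open Set

theorem exists_pos_eq_of_continuousOn_Ici {f : ℝ → ℝ} {c L : ℝ}
    (hf : ContinuousOn f (Ici 0)) (h0 : c < f 0) (hL : 0 ≤ L) (hfL : f L < c) :
    ∃ l, 0 < l ∧ f l = c := by
  obtain ⟨l, hl, hfl⟩ := intermediate_value_Icc' hL (hf.mono Icc_subset_Ici_self)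
    ⟨hfL.le, h0.le⟩
  refine ⟨l, hl.1.lt_of_ne ?_, hfl⟩
  rintro rfl
  exact h0.ne' hfl

theorem div_mul_le_div_mul_div {A a b c l : ℝ} (hA : 0 ≤ A) (ha : 0 < a) (hl : 0 ≤ l)
    (hb : 0 < b) (hbc : b ≤ c) : A / ((l + a) * c) ≤ A / (a * b) * (a / (l + a)) := by
  have hla : 0 < l + a := by positivity
  calc A / ((l + a) * c) ≤ A / ((l + a) * b) := by gcongr
    _ = A / (a * b) * (a / (l + a)) := by field_simp

/-- If R_c = G₁(0) > 1 then the characteristic equation G₁(λ) = 1 has a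
positive real root λ*. -/
theorem stmt_7
    (beta rQ rA rJ g1 g2 k1 k2 s1 s2 s3 s4 delta mu p : ℝ)
    (hbeta : 0 < beta) (hrQ : 0 < rQ) (hrA : 0 < rA) (hrJ : 0 < rJ)
    (hg1 : 0 < g1) (hg2 : 0 < g2) (hk1 : 0 < k1) (hk2 : 0 < k2)
    (hs1 : 0 < s1) (hs2 : 0 < s2) (hs3 : 0 < s3) (hs4 : 0 < s4)
    (hdelta : 0 < delta) (hmu : 0 < mu) (hp0 : 0 < p) (hp1 : p < 1)
    (m1 m2 m3 m4 m5 : ℝ)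
    (hm1 : m1 = g1 + k1 + mu) (hm2 : m2 = k2 + s1 + mu) (hm3 : m3 = s2 + mu)
    (hm4 : m4 = g2 + s3 + mu) (hm5 : m5 = delta + s4 + mu)
    (G1 : ℝ → ℝ)
    (hG1 : ∀ l : ℝ, 0 ≤ l →
      G1 l = rQ * beta * g1 / ((l + m1) * (l + m2))
        + rA * beta * p * k1 / ((l + m1) * (l + m3))
        + beta * k1 * (1 - p) / ((l + m1) * (l + m4))
        + rJ * beta * g1 * k2 / ((l + m1) * (l + m2) * (l + m5))
        + rJ * beta * (1 - p) * k1 * g2 / ((l + m1) * (l + m4) * (l + m5)))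
    (Rc : ℝ) (hRc : Rc = G1 0) (hRcgt : 1 < Rc) :
    ∃ l : ℝ, 0 < l ∧ G1 l = 1 := by
  subst hRc
  have hm1' : 0 < m1 := by rw [hm1]; positivity
  have hm2' : 0 < m2 := by rw [hm2]; positivity
  have hm3' : 0 < m3 := by rw [hm3]; positivity
  have hm4' : 0 < m4 := by rw [hm4]; positivity
  have hm5' : 0 < m5 := by rw [hm5]; positivity
  have hp' : 0 < 1 - p := sub_pos.mpr hp1
  have hcont : ContinuousOn G1 (Ici 0) := by
    refine ContinuousOn.congr ?_ fun l hl => hG1 l hl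
    fun_prop (disch := (intro l hl; have : (0 : ℝ) ≤ l := hl; positivity))
  have hbound : ∀ l, 0 ≤ l → G1 l ≤ G1 0 * (m1 / (l + m1)) := by
    intro l hl
    rw [hG1 l hl, hG1 0 le_rfl]
    simp only [zero_add, add_mul _ _ (m1 / (l + m1)), mul_assoc]
    gcongr ?_ + ?_ + ?_ + ?_ + ?_
    all_goals refine div_mul_le_div_mul_div (by positivity) hm1' hl (by positivity) ?_
    all_goals first | linarith | (gcongr <;> linarith)
  have hG1_lt : G1 (m1 * G1 0) < 1 := by
    have hR : 0 < G1 0 := by linarith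
    calc G1 (m1 * G1 0) ≤ G1 0 * (m1 / (m1 * G1 0 + m1)) := hbound _ (by positivity)
      _ = G1 0 / (G1 0 + 1) := by field_simp
      _ < 1 := by rw [div_lt_one (by positivity)]; linarith
  exact exists_pos_eq_of_continuousOn_Ici hcont hRcgt (by positivity) hG1_lt
end

section
/- Let all parameters be positive reals with p ∈ (0,1). Consider the COVID-19 model (2.1). Call a point (S*, E*, Q*, A*, I*, J*, R*) ∈ ℝ⁷ with all seven coordinates strictly positive an endemic equilibrium if the right-hand side of system (2.1) vanishes at this point. Then: (i) if R_c > 1 the model has exactly one endemic equilibrium; (ii) if R_c ≤ 1 the model has no endemic equilibrium. -/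
/-!
At an endemic equilibrium the linear equations for `Q, A, I, J, R` make each of them a fixed
positive multiple of `E`, so the population is `N = S + w E` and the force of infection is
`m₁ R_c S E / N`. The equation for `E` then reads `R_c S = S + w E`, and together with
`μ S = Π - m₁ E` this is a linear system in `(S, E)` whose unique solution is positive exactly
when `R_c > 1`.
-/

/-- A point of ℝ⁷ with all coordinates strictly positive is an endemic equilibrium
of the COVID-19 model (2.1) if the right-hand side of the system vanishes there. -/
def IsEndemicEquilibrium
    (Pi beta rQ rA rJ g1 g2 k1 k2 s1 s2 s3 s4 delta mu p : ℝ)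
    (x : ℝ × ℝ × ℝ × ℝ × ℝ × ℝ × ℝ) : Prop :=
  0 < x.1 ∧ 0 < x.2.1 ∧ 0 < x.2.2.1 ∧ 0 < x.2.2.2.1 ∧ 0 < x.2.2.2.2.1 ∧
    0 < x.2.2.2.2.2.1 ∧ 0 < x.2.2.2.2.2.2 ∧
    (let S := x.1; let E := x.2.1; let Q := x.2.2.1; let A := x.2.2.2.1
     let I := x.2.2.2.2.1; let J := x.2.2.2.2.2.1; let R := x.2.2.2.2.2.2
     let N := S + E + Q + A + I + J + R
     Pi - S * (beta * I + rQ * beta * Q + rA * beta * A + rJ * beta * J) / N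
        - mu * S = 0 ∧
      S * (beta * I + rQ * beta * Q + rA * beta * A + rJ * beta * J) / N
        - (g1 + k1 + mu) * E = 0 ∧
      g1 * E - (k2 + s1 + mu) * Q = 0 ∧
      p * k1 * E - (s2 + mu) * A = 0 ∧
      (1 - p) * k1 * E - (g2 + s3 + mu) * I = 0 ∧
      k2 * Q + g2 * I - (delta + s4 + mu) * J = 0 ∧
      s1 * Q + s2 * A + s3 * I + s4 * J - mu * R = 0)

theorem existsUnique_pos_of_linear_system {Pi mu m w c : ℝ} (hPi : 0 < Pi) (hmu : 0 < mu)
    (hm : 0 < m) (hw : 0 < w) (hc : 0 < c) :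
    ∃! SE : ℝ × ℝ, 0 < SE.1 ∧ 0 < SE.2 ∧ mu * SE.1 = Pi - m * SE.2 ∧ SE.1 * c = w * SE.2 := by
  have hD : 0 < mu * w + m * c := by positivity
  refine ⟨(w / (mu * w + m * c) * Pi, c / (mu * w + m * c) * Pi), ⟨by positivity, by positivity,
    by field_simp; ring, by field_simp⟩, ?_⟩
  rintro ⟨S, E⟩ ⟨-, -, hS, hE⟩
  have hE' : E = c / (mu * w + m * c) * Pi := by
    rw [div_mul_eq_mul_div, eq_div_iff hD.ne']
    linear_combination c * hS - mu * hE
  subst hE'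
  refine Prod.ext ?_ rfl
  apply mul_left_cancel₀ hmu.ne'
  rw [hS]
  field_simp
  ring

structure CovidModel where
  (Pi beta rQ rA rJ g1 g2 k1 k2 s1 s2 s3 s4 delta mu p : ℝ)
  Pi_pos : 0 < Pi
  g1_pos : 0 < g1
  g2_pos : 0 < g2
  k1_pos : 0 < k1
  k2_pos : 0 < k2
  s1_pos : 0 < s1
  s2_pos : 0 < s2
  s3_pos : 0 < s3
  s4_pos : 0 < s4
  delta_pos : 0 < delta
  mu_pos : 0 < mu
  p_pos : 0 < p
  p_lt_one : p < 1

noncomputable section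

namespace CovidModel

variable (M : CovidModel)

def IsEndemic (x : ℝ × ℝ × ℝ × ℝ × ℝ × ℝ × ℝ) : Prop :=
  IsEndemicEquilibrium M.Pi M.beta M.rQ M.rA M.rJ M.g1 M.g2 M.k1 M.k2 M.s1 M.s2 M.s3 M.s4
    M.delta M.mu M.p x

def m1 : ℝ := M.g1 + M.k1 + M.mu
def m2 : ℝ := M.k2 + M.s1 + M.mu
def m3 : ℝ := M.s2 + M.mu
def m4 : ℝ := M.g2 + M.s3 + M.mu
def m5 : ℝ := M.delta + M.s4 + M.mu

def Rc : ℝ :=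
  M.rQ * M.beta * M.g1 / (M.m1 * M.m2) + M.rA * M.beta * M.p * M.k1 / (M.m1 * M.m3)
    + M.beta * M.k1 * (1 - M.p) / (M.m1 * M.m4)
    + M.rJ * M.beta * M.g1 * M.k2 / (M.m1 * M.m2 * M.m5)
    + M.rJ * M.beta * (1 - M.p) * M.k1 * M.g2 / (M.m1 * M.m4 * M.m5)

/- The ratios `Q/E`, `A/E`, `I/E`, `J/E`, `R/E` forced by the last five equations of (2.1);
`totalRatio` is then `(N - S) / E`. -/
def qRatio : ℝ := M.g1 / M.m2
def aRatio : ℝ := M.p * M.k1 / M.m3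
def iRatio : ℝ := (1 - M.p) * M.k1 / M.m4
def jRatio : ℝ := (M.k2 * M.qRatio + M.g2 * M.iRatio) / M.m5
def rRatio : ℝ := (M.s1 * M.qRatio + M.s2 * M.aRatio + M.s3 * M.iRatio + M.s4 * M.jRatio) / M.mu

def totalRatio : ℝ := 1 + M.qRatio + M.aRatio + M.iRatio + M.jRatio + M.rRatio

def point (S E : ℝ) : ℝ × ℝ × ℝ × ℝ × ℝ × ℝ × ℝ :=
  (S, E, M.qRatio * E, M.aRatio * E, M.iRatio * E, M.jRatio * E, M.rRatio * E)

theorem m1_pos : 0 < M.m1 := add_pos (add_pos M.g1_pos M.k1_pos) M.mu_pos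
theorem m2_pos : 0 < M.m2 := add_pos (add_pos M.k2_pos M.s1_pos) M.mu_pos
theorem m3_pos : 0 < M.m3 := add_pos M.s2_pos M.mu_pos
theorem m4_pos : 0 < M.m4 := add_pos (add_pos M.g2_pos M.s3_pos) M.mu_pos
theorem m5_pos : 0 < M.m5 := add_pos (add_pos M.delta_pos M.s4_pos) M.mu_pos

theorem qRatio_pos : 0 < M.qRatio := div_pos M.g1_pos M.m2_pos
theorem aRatio_pos : 0 < M.aRatio := div_pos (mul_pos M.p_pos M.k1_pos) M.m3_pos
theorem iRatio_pos : 0 < M.iRatio := div_pos (mul_pos (sub_pos.2 M.p_lt_one) M.k1_pos) M.m4_pos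

theorem jRatio_pos : 0 < M.jRatio :=
  div_pos (add_pos (mul_pos M.k2_pos M.qRatio_pos) (mul_pos M.g2_pos M.iRatio_pos)) M.m5_pos

theorem rRatio_pos : 0 < M.rRatio := by
  refine div_pos ?_ M.mu_pos
  linarith [mul_pos M.s1_pos M.qRatio_pos, mul_pos M.s2_pos M.aRatio_pos,
    mul_pos M.s3_pos M.iRatio_pos, mul_pos M.s4_pos M.jRatio_pos]

theorem totalRatio_pos : 0 < M.totalRatio := by
  unfold totalRatio
  linarith [M.qRatio_pos, M.aRatio_pos, M.iRatio_pos, M.jRatio_pos, M.rRatio_pos]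

theorem m2_mul_qRatio : M.m2 * M.qRatio = M.g1 := mul_div_cancel₀ _ M.m2_pos.ne'
theorem m3_mul_aRatio : M.m3 * M.aRatio = M.p * M.k1 := mul_div_cancel₀ _ M.m3_pos.ne'
theorem m4_mul_iRatio : M.m4 * M.iRatio = (1 - M.p) * M.k1 := mul_div_cancel₀ _ M.m4_pos.ne'

theorem m5_mul_jRatio : M.m5 * M.jRatio = M.k2 * M.qRatio + M.g2 * M.iRatio :=
  mul_div_cancel₀ _ M.m5_pos.ne'

theorem mu_mul_rRatio :
    M.mu * M.rRatio = M.s1 * M.qRatio + M.s2 * M.aRatio + M.s3 * M.iRatio + M.s4 * M.jRatio :=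
  mul_div_cancel₀ _ M.mu_pos.ne'

theorem m1_mul_Rc :
    M.m1 * M.Rc = M.beta * (M.iRatio + M.rQ * M.qRatio + M.rA * M.aRatio + M.rJ * M.jRatio) := by
  have := M.m1_pos.ne'; have := M.m2_pos.ne'; have := M.m3_pos.ne'; have := M.m4_pos.ne'
  have := M.m5_pos.ne'
  unfold Rc jRatio qRatio aRatio iRatio
  field_simp
  ring

theorem isEndemic_point {S E : ℝ} (hS : 0 < S) (hE : 0 < E)
    (hSE : M.mu * S = M.Pi - M.m1 * E) (hRc : S * (M.Rc - 1) = M.totalRatio * E) :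
    M.IsEndemic (M.point S E) := by
  refine ⟨hS, hE, mul_pos M.qRatio_pos hE, mul_pos M.aRatio_pos hE, mul_pos M.iRatio_pos hE,
    mul_pos M.jRatio_pos hE, mul_pos M.rRatio_pos hE, ?_⟩
  have hN : 0 < S + M.totalRatio * E := add_pos hS (mul_pos M.totalRatio_pos hE)
  unfold totalRatio at hN hRc
  have hforce : S * (M.beta * (M.iRatio * E) + M.rQ * M.beta * (M.qRatio * E)
      + M.rA * M.beta * (M.aRatio * E) + M.rJ * M.beta * (M.jRatio * E))
      / (S + E + M.qRatio * E + M.aRatio * E + M.iRatio * E + M.jRatio * E + M.rRatio * E)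
      = M.m1 * E := by
    rw [div_eq_iff (by linarith)]
    linear_combination (-(S * E)) * M.m1_mul_Rc + (M.m1 * E) * hRc
  simp only [point, hforce, ← m1.eq_1, ← m2.eq_1, ← m3.eq_1, ← m4.eq_1, ← m5.eq_1]
  exact ⟨by linarith, sub_self _, by linear_combination -E * M.m2_mul_qRatio,
    by linear_combination -E * M.m3_mul_aRatio, by linear_combination -E * M.m4_mul_iRatio,
    by linear_combination -E * M.m5_mul_jRatio, by linear_combination -E * M.mu_mul_rRatio⟩

theorem IsEndemic.exists_eq_point {x : ℝ × ℝ × ℝ × ℝ × ℝ × ℝ × ℝ} (hx : M.IsEndemic x) :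
    ∃ S E, 0 < S ∧ 0 < E ∧ M.mu * S = M.Pi - M.m1 * E ∧
      S * (M.Rc - 1) = M.totalRatio * E ∧ x = M.point S E := by
  obtain ⟨S, E, Q, A, I, J, R⟩ := x
  obtain ⟨hS, hE, hQ, hA, hI, hJ, hR, hSeq, hEeq, hQeq, hAeq, hIeq, hJeq, hReq⟩ := hx
  simp only [← m1.eq_1, ← m2.eq_1, ← m3.eq_1, ← m4.eq_1, ← m5.eq_1] at hEeq hQeq hAeq hIeq hJeq
  have hSE : M.mu * S = M.Pi - M.m1 * E := by linarith
  have hQE : Q = M.qRatio * E :=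
    mul_left_cancel₀ M.m2_pos.ne' (by linear_combination -hQeq - E * M.m2_mul_qRatio)
  have hAE : A = M.aRatio * E :=
    mul_left_cancel₀ M.m3_pos.ne' (by linear_combination -hAeq - E * M.m3_mul_aRatio)
  have hIE : I = M.iRatio * E :=
    mul_left_cancel₀ M.m4_pos.ne' (by linear_combination -hIeq - E * M.m4_mul_iRatio)
  have hJE : J = M.jRatio * E := mul_left_cancel₀ M.m5_pos.ne'
    (by linear_combination -hJeq - E * M.m5_mul_jRatio + M.k2 * hQE + M.g2 * hIE)
  have hRE : R = M.rRatio * E := mul_left_cancel₀ M.mu_pos.ne'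
    (by linear_combination -hReq - E * M.mu_mul_rRatio + M.s1 * hQE + M.s2 * hAE
      + M.s3 * hIE + M.s4 * hJE)
  rw [sub_eq_zero, div_eq_iff (by linarith)] at hEeq
  subst hQE hAE hIE hJE hRE
  refine ⟨S, E, hS, hE, hSE, mul_left_cancel₀ (mul_pos M.m1_pos hE).ne' ?_, rfl⟩
  unfold totalRatio
  linear_combination (S * E) * M.m1_mul_Rc + hEeq

theorem existsUnique_isEndemic (h : 1 < M.Rc) : ∃! x, M.IsEndemic x := by
  obtain ⟨⟨S, E⟩, ⟨hS, hE, hSE, hRc⟩, huniq⟩ := existsUnique_pos_of_linear_system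
    M.Pi_pos M.mu_pos M.m1_pos M.totalRatio_pos (sub_pos.2 h)
  refine ⟨M.point S E, M.isEndemic_point hS hE hSE hRc, fun x hx => ?_⟩
  obtain ⟨S', E', hS', hE', hSE', hRc', rfl⟩ := hx.exists_eq_point
  cases huniq (S', E') ⟨hS', hE', hSE', hRc'⟩
  rfl

theorem not_exists_isEndemic (h : M.Rc ≤ 1) : ¬∃ x, M.IsEndemic x := by
  rintro ⟨x, hx⟩
  obtain ⟨S, E, hS, hE, -, hRc, -⟩ := hx.exists_eq_point
  have : S * (M.Rc - 1) ≤ 0 := mul_nonpos_of_nonneg_of_nonpos hS.le (sub_nonpos.2 h)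
  linarith [mul_pos M.totalRatio_pos hE]

end CovidModel

end

theorem stmt_9_general
    (Pi beta rQ rA rJ g1 g2 k1 k2 s1 s2 s3 s4 delta mu p : ℝ)
    (hPi : 0 < Pi)
    (hg1 : 0 < g1) (hg2 : 0 < g2) (hk1 : 0 < k1) (hk2 : 0 < k2)
    (hs1 : 0 < s1) (hs2 : 0 < s2) (hs3 : 0 < s3) (hs4 : 0 < s4)
    (hdelta : 0 < delta) (hmu : 0 < mu) (hp0 : 0 < p) (hp1 : p < 1)
    (m1 m2 m3 m4 m5 : ℝ)
    (hm1 : m1 = g1 + k1 + mu) (hm2 : m2 = k2 + s1 + mu) (hm3 : m3 = s2 + mu)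
    (hm4 : m4 = g2 + s3 + mu) (hm5 : m5 = delta + s4 + mu)
    (Rc : ℝ)
    (hRc : Rc = rQ * beta * g1 / (m1 * m2) + rA * beta * p * k1 / (m1 * m3)
      + beta * k1 * (1 - p) / (m1 * m4)
      + rJ * beta * g1 * k2 / (m1 * m2 * m5)
      + rJ * beta * (1 - p) * k1 * g2 / (m1 * m4 * m5)) :
    (1 < Rc → ∃! x : ℝ × ℝ × ℝ × ℝ × ℝ × ℝ × ℝ,
        IsEndemicEquilibrium Pi beta rQ rA rJ g1 g2 k1 k2 s1 s2 s3 s4 delta mu p x) ∧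
      (Rc ≤ 1 → ¬ ∃ x : ℝ × ℝ × ℝ × ℝ × ℝ × ℝ × ℝ,
        IsEndemicEquilibrium Pi beta rQ rA rJ g1 g2 k1 k2 s1 s2 s3 s4 delta mu p x) := by
  subst hm1 hm2 hm3 hm4 hm5 hRc
  let M : CovidModel := ⟨Pi, beta, rQ, rA, rJ, g1, g2, k1, k2, s1, s2, s3, s4, delta, mu, p,
    hPi, hg1, hg2, hk1, hk2, hs1, hs2, hs3, hs4, hdelta, hmu, hp0, hp1⟩
  exact ⟨M.existsUnique_isEndemic, M.not_exists_isEndemic⟩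

/-- Model (2.1) has a unique endemic equilibrium when R_c > 1 and none when
R_c ≤ 1. -/
theorem stmt_9
    (Pi beta rQ rA rJ g1 g2 k1 k2 s1 s2 s3 s4 delta mu p : ℝ)
    (hPi : 0 < Pi) (hbeta : 0 < beta) (hrQ : 0 < rQ) (hrA : 0 < rA) (hrJ : 0 < rJ)
    (hg1 : 0 < g1) (hg2 : 0 < g2) (hk1 : 0 < k1) (hk2 : 0 < k2)
    (hs1 : 0 < s1) (hs2 : 0 < s2) (hs3 : 0 < s3) (hs4 : 0 < s4)
    (hdelta : 0 < delta) (hmu : 0 < mu) (hp0 : 0 < p) (hp1 : p < 1)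
    (m1 m2 m3 m4 m5 : ℝ)
    (hm1 : m1 = g1 + k1 + mu) (hm2 : m2 = k2 + s1 + mu) (hm3 : m3 = s2 + mu)
    (hm4 : m4 = g2 + s3 + mu) (hm5 : m5 = delta + s4 + mu)
    (Rc : ℝ)
    (hRc : Rc = rQ * beta * g1 / (m1 * m2) + rA * beta * p * k1 / (m1 * m3)
      + beta * k1 * (1 - p) / (m1 * m4)
      + rJ * beta * g1 * k2 / (m1 * m2 * m5)
      + rJ * beta * (1 - p) * k1 * g2 / (m1 * m4 * m5)) :
    (1 < Rc → ∃! x : ℝ × ℝ × ℝ × ℝ × ℝ × ℝ × ℝ,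
        IsEndemicEquilibrium Pi beta rQ rA rJ g1 g2 k1 k2 s1 s2 s3 s4 delta mu p x) ∧
      (Rc ≤ 1 → ¬ ∃ x : ℝ × ℝ × ℝ × ℝ × ℝ × ℝ × ℝ,
        IsEndemicEquilibrium Pi beta rQ rA rJ g1 g2 k1 k2 s1 s2 s3 s4 delta mu p x) :=
  stmt_9_general Pi beta rQ rA rJ g1 g2 k1 k2 s1 s2 s3 s4 delta mu p hPi hg1 hg2 hk1 hk2 hs1 hs2 hs3
    hs4 hdelta hmu hp0 hp1 m1 m2 m3 m4 m5 hm1 hm2 hm3 hm4 hm5 Rc hRc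
end

section
/- Let β, r_Q, r_A, r_J, γ2, k1, k2, σ1, σ2, σ3, σ4, δ, μ be positive reals and p ∈ (0,1). Regard R_c as a function of γ1 > 0: R_c(γ1) = r_Qβγ1/((γ1+k1+μ)(k2+σ1+μ)) + r_Aβ p k1/((γ1+k1+μ)(σ2+μ)) + β k1(1−p)/((γ1+k1+μ)(γ2+σ3+μ)) + r_Jβγ1k2/((γ1+k1+μ)(k2+σ1+μ)(δ+σ4+μ)) + r_Jβ(1−p)k1γ2/((γ1+k1+μ)(γ2+σ3+μ)(δ+σ4+μ)). Define r_{γ1} = ((k2+σ1+μ)/(k1+μ))·[ r_A p k1/(σ2+μ) + k1(1−p)/(γ2+σ3+μ) ] + (r_J(k2+σ1+μ)/((k1+μ)(δ+σ4+μ)))·[ (1−p)k1γ2/(γ2+σ3+μ) − k2(k1+μ)/(k2+σ1+μ) ]. Then for every γ1 > 0, the derivative dR_c/dγ1 is negative if and only if r_Q < r_{γ1}, and positive if and only if r_Q > r_{γ1}. -/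
/-!
Every term of `R_c(γ₁)` has the common denominator `γ₁ + k₁ + μ`, so `R_c` is a linear
fractional function `(a γ₁ + b) / (γ₁ + k₁ + μ)`; its derivative is
`(a (k₁ + μ) - b) / (γ₁ + k₁ + μ)²`, whose sign is constant in `γ₁`. Factoring out the positive
constant `β (k₁ + μ) / (k₂ + σ₁ + μ)` turns the numerator into `r_Q - r_{γ₁}`.
-/

theorem hasDerivAt_linear_fractional {𝕜 : Type*} [NontriviallyNormedField 𝕜] (a b c x : 𝕜)
    (hx : x + c ≠ 0) :
    HasDerivAt (fun y => (a * y + b) / (y + c)) ((a * c - b) / (x + c) ^ 2) x := by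
  have hnum : HasDerivAt (fun y => a * y + b) a x := by
    simpa using ((hasDerivAt_id x).const_mul a).add_const b
  have hden : HasDerivAt (fun y => y + c) 1 x := (hasDerivAt_id x).add_const c
  exact (hnum.div hden hx).congr_deriv (by ring)

theorem deriv_linear_fractional_neg_iff_and_pos_iff (a b c x : ℝ) (hx : x + c ≠ 0) :
    (deriv (fun y => (a * y + b) / (y + c)) x < 0 ↔ a * c < b) ∧
      (0 < deriv (fun y => (a * y + b) / (y + c)) x ↔ b < a * c) := by
  have hsq : 0 < (x + c) ^ 2 := by positivity
  rw [(hasDerivAt_linear_fractional a b c x hx).deriv, div_lt_iff₀ hsq, zero_mul, sub_neg,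
    div_pos_iff_of_pos_right hsq, sub_pos]
  exact ⟨.rfl, .rfl⟩

theorem stmt_10_general
    (beta rQ rA rJ g2 k1 k2 s1 s2 s3 s4 delta mu p : ℝ)
    (hbeta : 0 < beta)
    (hk1 : 0 < k1) (hk2 : 0 < k2)
    (hs1 : 0 < s1)
    (hmu : 0 < mu)
    (Rc : ℝ → ℝ)
    (hRc : ∀ x : ℝ, Rc x =
      rQ * beta * x / ((x + k1 + mu) * (k2 + s1 + mu))
      + rA * beta * p * k1 / ((x + k1 + mu) * (s2 + mu))
      + beta * k1 * (1 - p) / ((x + k1 + mu) * (g2 + s3 + mu))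
      + rJ * beta * x * k2 / ((x + k1 + mu) * (k2 + s1 + mu) * (delta + s4 + mu))
      + rJ * beta * (1 - p) * k1 * g2 /
          ((x + k1 + mu) * (g2 + s3 + mu) * (delta + s4 + mu)))
    (rg1 : ℝ)
    (hrg1 : rg1 = (k2 + s1 + mu) / (k1 + mu) *
        (rA * p * k1 / (s2 + mu) + k1 * (1 - p) / (g2 + s3 + mu))
      + rJ * (k2 + s1 + mu) / ((k1 + mu) * (delta + s4 + mu)) *
        ((1 - p) * k1 * g2 / (g2 + s3 + mu) - k2 * (k1 + mu) / (k2 + s1 + mu))) :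
    ∀ x : ℝ, 0 < x →
      (deriv Rc x < 0 ↔ rQ < rg1) ∧ (0 < deriv Rc x ↔ rg1 < rQ) := by
  intro x hx
  set a := rQ * beta / (k2 + s1 + mu) + rJ * beta * k2 / ((k2 + s1 + mu) * (delta + s4 + mu))
  set b := rA * beta * p * k1 / (s2 + mu) + beta * k1 * (1 - p) / (g2 + s3 + mu)
    + rJ * beta * (1 - p) * k1 * g2 / ((g2 + s3 + mu) * (delta + s4 + mu))
  have hRc_eq : Rc = fun y => (a * y + b) / (y + (k1 + mu)) := by
    funext y
    rw [hRc]
    simp only [a, b, div_eq_mul_inv, mul_inv]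
    ring
  have hnum : a * (k1 + mu) - b = beta * (k1 + mu) / (k2 + s1 + mu) * (rQ - rg1) := by
    simp only [a, b, hrg1]
    -- only `k₁ + μ` and `k₂ + σ₁ + μ` are known to be nonzero, so hide the other denominators
    generalize s2 + mu = B, g2 + s3 + mu = C, delta + s4 + mu = E
    field_simp
    ring
  have hfactor : 0 < beta * (k1 + mu) / (k2 + s1 + mu) := by positivity
  rw [hRc_eq]
  refine (deriv_linear_fractional_neg_iff_and_pos_iff a b (k1 + mu) x (by positivity)).imp
    (fun h => h.trans ?_) (fun h => h.trans ?_)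
  · rw [← sub_neg, hnum]
    simp [mul_neg_iff, hfactor, hfactor.not_gt]
  · rw [← sub_pos, hnum, mul_pos_iff_of_pos_left hfactor, sub_pos]

/-- Threshold analysis for quarantine: the derivative of R_c with respect to γ1 is
negative iff r_Q < r_{γ1} and positive iff r_Q > r_{γ1}. -/
theorem stmt_10
    (beta rQ rA rJ g2 k1 k2 s1 s2 s3 s4 delta mu p : ℝ)
    (hbeta : 0 < beta) (hrQ : 0 < rQ) (hrA : 0 < rA) (hrJ : 0 < rJ)
    (hg2 : 0 < g2) (hk1 : 0 < k1) (hk2 : 0 < k2)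
    (hs1 : 0 < s1) (hs2 : 0 < s2) (hs3 : 0 < s3) (hs4 : 0 < s4)
    (hdelta : 0 < delta) (hmu : 0 < mu) (hp0 : 0 < p) (hp1 : p < 1)
    (Rc : ℝ → ℝ)
    (hRc : ∀ x : ℝ, Rc x =
      rQ * beta * x / ((x + k1 + mu) * (k2 + s1 + mu))
      + rA * beta * p * k1 / ((x + k1 + mu) * (s2 + mu))
      + beta * k1 * (1 - p) / ((x + k1 + mu) * (g2 + s3 + mu))
      + rJ * beta * x * k2 / ((x + k1 + mu) * (k2 + s1 + mu) * (delta + s4 + mu))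
      + rJ * beta * (1 - p) * k1 * g2 /
          ((x + k1 + mu) * (g2 + s3 + mu) * (delta + s4 + mu)))
    (rg1 : ℝ)
    (hrg1 : rg1 = (k2 + s1 + mu) / (k1 + mu) *
        (rA * p * k1 / (s2 + mu) + k1 * (1 - p) / (g2 + s3 + mu))
      + rJ * (k2 + s1 + mu) / ((k1 + mu) * (delta + s4 + mu)) *
        ((1 - p) * k1 * g2 / (g2 + s3 + mu) - k2 * (k1 + mu) / (k2 + s1 + mu))) :
    ∀ x : ℝ, 0 < x →
      (deriv Rc x < 0 ↔ rQ < rg1) ∧ (0 < deriv Rc x ↔ rg1 < rQ) :=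
  stmt_10_general beta rQ rA rJ g2 k1 k2 s1 s2 s3 s4 delta mu p hbeta hk1 hk2 hs1 hmu Rc hRc rg1
    hrg1
end

section
/- Let β, r_Q, r_A, r_J, γ1, k1, k2, σ1, σ2, σ3, σ4, δ, μ be positive reals and p ∈ (0,1). Regard R_c as a function of γ2 > 0: R_c(γ2) = r_Qβγ1/((γ1+k1+μ)(k2+σ1+μ)) + r_Aβ p k1/((γ1+k1+μ)(σ2+μ)) + β k1(1−p)/((γ1+k1+μ)(γ2+σ3+μ)) + r_Jβγ1k2/((γ1+k1+μ)(k2+σ1+μ)(δ+σ4+μ)) + r_Jβ(1−p)k1γ2/((γ1+k1+μ)(γ2+σ3+μ)(δ+σ4+μ)). Define r_{γ2} = (δ+σ4+μ)/(σ3+μ). Then for every γ2 > 0, the derivative dR_c/dγ2 is negative if and only if r_J < r_{γ2}, and positive if and only if r_J > r_{γ2}. -/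
/-!
Only two terms of `R_c` depend on `γ2`, and since `γ2 / (γ2 + c) = 1 - c / (γ2 + c)` with
`c = σ3 + μ`, `R_c(γ2)` is a constant plus `M / (γ2 + c)`, where
`M = β k1 (1 - p) (δ + σ4 + μ - r_J c) / ((γ1 + k1 + μ) (δ + σ4 + μ))`.
Hence `R_c'(γ2) = -M / (γ2 + c)²` has the sign of `r_J c - (δ + σ4 + μ)`.
-/

theorem hasDerivAt_add_div_add_mul_div_add (a b e c x : ℝ) (hx : x + c ≠ 0) :
    HasDerivAt (fun y => a + b / (y + c) + e * y / (y + c)) ((e * c - b) / (x + c) ^ 2) x := by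
  have hden : HasDerivAt (fun y => y + c) 1 x := (hasDerivAt_id' x).add_const c
  have h := (((hasDerivAt_const x b).div hden hx).const_add a).add
    (((hasDerivAt_id' x).const_mul e).div hden hx)
  exact h.congr_deriv (by ring)

theorem mul_mul_sub_neg_iff_and_pos_iff {P r c D : ℝ} (hP : 0 < P) (hc : 0 < c) :
    (P * (r * c - D) < 0 ↔ r < D / c) ∧ (0 < P * (r * c - D) ↔ D / c < r) := by
  constructor
  · rw [← mul_zero P, mul_lt_mul_iff_right₀ hP, sub_neg, lt_div_iff₀ hc]
  · rw [← mul_zero P, mul_lt_mul_iff_right₀ hP, sub_pos, div_lt_iff₀ hc]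

theorem stmt_11_general
    (beta rQ rA rJ g1 k1 k2 s1 s2 s3 s4 delta mu p : ℝ)
    (hbeta : 0 < beta)
    (hg1 : 0 < g1) (hk1 : 0 < k1)
    (hs3 : 0 < s3) (hs4 : 0 < s4)
    (hdelta : 0 < delta) (hmu : 0 < mu) (hp1 : p < 1)
    (Rc : ℝ → ℝ)
    (hRc : ∀ x : ℝ, Rc x =
      rQ * beta * g1 / ((g1 + k1 + mu) * (k2 + s1 + mu))
      + rA * beta * p * k1 / ((g1 + k1 + mu) * (s2 + mu))
      + beta * k1 * (1 - p) / ((g1 + k1 + mu) * (x + s3 + mu))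
      + rJ * beta * g1 * k2 / ((g1 + k1 + mu) * (k2 + s1 + mu) * (delta + s4 + mu))
      + rJ * beta * (1 - p) * k1 * x /
          ((g1 + k1 + mu) * (x + s3 + mu) * (delta + s4 + mu)))
    (rg2 : ℝ)
    (hrg2 : rg2 = (delta + s4 + mu) / (s3 + mu)) :
    ∀ x : ℝ, 0 < x →
      (deriv Rc x < 0 ↔ rJ < rg2) ∧ (0 < deriv Rc x ↔ rg2 < rJ) := by
  intro x hx
  set c := s3 + mu
  set D := delta + s4 + mu
  set K := beta * k1 * (1 - p) / (g1 + k1 + mu)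
  have hc : 0 < c := by positivity
  have hD : 0 < D := by positivity
  have hK : 0 < K := div_pos (mul_pos (mul_pos hbeta hk1) (sub_pos.2 hp1)) (by positivity)
  have hRc_eq : Rc = fun y =>
      (rQ * beta * g1 / ((g1 + k1 + mu) * (k2 + s1 + mu))
        + rA * beta * p * k1 / ((g1 + k1 + mu) * (s2 + mu))
        + rJ * beta * g1 * k2 / ((g1 + k1 + mu) * (k2 + s1 + mu) * D))
      + K / (y + c) + rJ * K / D * y / (y + c) := by
    funext y
    rw [hRc]
    simp only [c, D, K, div_eq_mul_inv, mul_inv]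
    ring
  have hderiv : deriv Rc x = K / (D * (x + c) ^ 2) * (rJ * c - D) := by
    rw [hRc_eq, (hasDerivAt_add_div_add_mul_div_add _ _ _ c x (by positivity)).deriv]
    field_simp
  rw [hderiv, hrg2]
  exact mul_mul_sub_neg_iff_and_pos_iff (by positivity) hc

/-- Threshold analysis for isolation: the derivative of R_c with respect to γ2 is
negative iff r_J < r_{γ2} and positive iff r_J > r_{γ2}, where
r_{γ2} = (δ+σ4+μ)/(σ3+μ). -/
theorem stmt_11
    (beta rQ rA rJ g1 k1 k2 s1 s2 s3 s4 delta mu p : ℝ)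
    (hbeta : 0 < beta) (hrQ : 0 < rQ) (hrA : 0 < rA) (hrJ : 0 < rJ)
    (hg1 : 0 < g1) (hk1 : 0 < k1) (hk2 : 0 < k2)
    (hs1 : 0 < s1) (hs2 : 0 < s2) (hs3 : 0 < s3) (hs4 : 0 < s4)
    (hdelta : 0 < delta) (hmu : 0 < mu) (hp0 : 0 < p) (hp1 : p < 1)
    (Rc : ℝ → ℝ)
    (hRc : ∀ x : ℝ, Rc x =
      rQ * beta * g1 / ((g1 + k1 + mu) * (k2 + s1 + mu))
      + rA * beta * p * k1 / ((g1 + k1 + mu) * (s2 + mu))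
      + beta * k1 * (1 - p) / ((g1 + k1 + mu) * (x + s3 + mu))
      + rJ * beta * g1 * k2 / ((g1 + k1 + mu) * (k2 + s1 + mu) * (delta + s4 + mu))
      + rJ * beta * (1 - p) * k1 * x /
          ((g1 + k1 + mu) * (x + s3 + mu) * (delta + s4 + mu)))
    (rg2 : ℝ)
    (hrg2 : rg2 = (delta + s4 + mu) / (s3 + mu)) :
    ∀ x : ℝ, 0 < x →
      (deriv Rc x < 0 ↔ rJ < rg2) ∧ (0 < deriv Rc x ↔ rg2 < rJ) :=
  stmt_11_general beta rQ rA rJ g1 k1 k2 s1 s2 s3 s4 delta mu p hbeta hg1 hk1 hs3 hs4 hdelta hmu hp1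
    Rc hRc rg2 hrg2
end

section
/- Let β, r_A, k1, σ2, σ3, μ be positive reals and p ∈ (0,1). Let F be the 3×3 real matrix whose first row is (0, r_Aβ, β) and other rows zero, and let V be the 3×3 matrix with rows (k1+μ, 0, 0), (−p k1, σ2+μ, 0), (−(1−p)k1, 0, σ3+μ). Then V is invertible and the spectral radius of F V⁻¹ equals R₀ := r_Aβ p k1/((k1+μ)(σ2+μ)) + β k1(1−p)/((k1+μ)(σ3+μ)). -/
/-!
F has a single nonzero row, so F V⁻¹ is upper triangular with diagonal ((F V⁻¹)₀₀, 0, 0): its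
spectrum is {(F V⁻¹)₀₀, 0}. Inverting the lower-triangular V explicitly shows (F V⁻¹)₀₀ = R₀,
and R₀ ≥ 0, so R₀ is the eigenvalue of largest modulus.
-/

open Matrix

theorem Matrix.IsUpperTriangular.mem_spectrum_iff {K n : Type*} [Field K] [Fintype n]
    [DecidableEq n] [LinearOrder n] {M : Matrix n n K} (hM : M.IsUpperTriangular) {z : K} :
    z ∈ spectrum K M ↔ ∃ i, M i i = z := by
  rw [mem_spectrum_iff_isRoot_charpoly, charpoly_of_isUpperTriangular M hM,
    Polynomial.IsRoot.def, Polynomial.eval_prod, Finset.prod_eq_zero_iff]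
  simp [sub_eq_zero, eq_comm]

theorem Matrix.mem_spectrum_iff_of_row_eq_zero {K : Type*} [Field K] {m : ℕ}
    {M : Matrix (Fin (m + 2)) (Fin (m + 2)) K} (hM : ∀ i ≠ 0, M i = 0) {z : K} :
    z ∈ spectrum K M ↔ z = M 0 0 ∨ z = 0 := by
  have hupper : M.IsUpperTriangular := fun i j hji => by
    rw [hM i (j.zero_le.trans_lt hji).ne']; rfl
  rw [hupper.mem_spectrum_iff]
  constructor
  · rintro ⟨i, rfl⟩
    by_cases hi : i = 0
    · exact .inl (by rw [hi])
    · exact .inr (by rw [hM i hi]; rfl)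
  · rintro (rfl | rfl)
    · exact ⟨0, rfl⟩
    · exact ⟨1, by rw [hM 1 one_ne_zero]; rfl⟩

theorem transitionMatrix_mul_inv_eq_one {k1 s2 s3 mu p : ℝ} (hk : k1 + mu ≠ 0) (h2 : s2 + mu ≠ 0)
    (h3 : s3 + mu ≠ 0) :
    !![k1 + mu, 0, 0; -(p * k1), s2 + mu, 0; -((1 - p) * k1), 0, s3 + mu] *
      !![(k1 + mu)⁻¹, 0, 0;
         p * k1 / ((k1 + mu) * (s2 + mu)), (s2 + mu)⁻¹, 0;
         (1 - p) * k1 / ((k1 + mu) * (s3 + mu)), 0, (s3 + mu)⁻¹] = 1 := by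
  ext i j
  fin_cases i <;> fin_cases j <;>
    simp [mul_apply, Fin.sum_univ_three] <;> field_simp <;> ring

/-- The basic reproduction number R₀ of the model without control is the spectral
radius of the next-generation matrix F V⁻¹: V is invertible, R₀ is an eigenvalue
of F V⁻¹, and every (complex) eigenvalue of F V⁻¹ has modulus at most R₀. -/
theorem stmt_12
    (beta rA k1 s2 s3 mu p : ℝ)
    (hbeta : 0 < beta) (hrA : 0 < rA) (hk1 : 0 < k1)
    (hs2 : 0 < s2) (hs3 : 0 < s3) (hmu : 0 < mu) (hp0 : 0 < p) (hp1 : p < 1)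
    (F V : Matrix (Fin 3) (Fin 3) ℝ)
    (hF : F = !![0, rA * beta, beta;
                 0, 0, 0;
                 0, 0, 0])
    (hV : V = !![k1 + mu, 0, 0;
                 -(p * k1), s2 + mu, 0;
                 -((1 - p) * k1), 0, s3 + mu])
    (R0 : ℝ)
    (hR0 : R0 = rA * beta * p * k1 / ((k1 + mu) * (s2 + mu))
      + beta * k1 * (1 - p) / ((k1 + mu) * (s3 + mu))) :
    IsUnit V ∧
      (R0 : ℂ) ∈ spectrum ℂ ((F * V⁻¹).map Complex.ofReal) ∧
      ∀ z ∈ spectrum ℂ ((F * V⁻¹).map Complex.ofReal), ‖z‖ ≤ R0 := by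
  have hk : 0 < k1 + mu := by positivity
  have h2 : 0 < s2 + mu := by positivity
  have h3 : 0 < s3 + mu := by positivity
  have hVW := transitionMatrix_mul_inv_eq_one (p := p) hk.ne' h2.ne' h3.ne'
  rw [← hV] at hVW
  have hR0_nonneg : 0 ≤ R0 := by rw [hR0]; positivity
  have hrows : ∀ i ≠ 0, (F * V⁻¹).map Complex.ofReal i = 0 := by
    intro i hi
    funext j
    rw [Pi.zero_apply, map_apply, mul_apply]
    fin_cases i <;> simp [hF, Fin.sum_univ_three] at hi ⊢
  have hdiag : (F * V⁻¹) 0 0 = R0 := by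
    rw [inv_eq_right_inv hVW, hF, hR0, mul_apply, Fin.sum_univ_three]
    simp only [of_apply, cons_val', cons_val_zero, cons_val_one, cons_val, cons_val_fin_one]
    ring
  have hspec : ∀ z, z ∈ spectrum ℂ ((F * V⁻¹).map Complex.ofReal) ↔ z = R0 ∨ z = 0 := fun z => by
    rw [mem_spectrum_iff_of_row_eq_zero hrows, map_apply, hdiag]
  refine ⟨(isUnit_iff_isUnit_det V).2 (isUnit_det_of_right_inverse hVW),
    (hspec _).2 (.inl rfl), fun z hz => ?_⟩
  rcases (hspec z).1 hz with rfl | rfl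
  · rw [Complex.norm_real, Real.norm_of_nonneg hR0_nonneg]
  · simpa using hR0_nonneg
end

section
/- Let β, r_A, k1, σ2, σ3, μ be positive reals and p ∈ (0,1). Let J₀ be the 5×5 real matrix with rows (−μ, 0, −r_Aβ, −β, 0), (0, −(k1+μ), r_Aβ, β, 0), (0, p k1, −(σ2+μ), 0, 0), (0, (1−p)k1, 0, −(σ3+μ), 0), (0, 0, σ2, σ3, −μ). If R₀ := r_Aβ p k1/((k1+μ)(σ2+μ)) + β k1(1−p)/((k1+μ)(σ3+μ)) < 1, then every complex eigenvalue λ of J₀ satisfies Re(λ) < 0. -/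
/-!
The `S` and `R` columns of `J₀` vanish off the diagonal, so `det (z - J₀)` factors as
`(z + μ)² · ((z + A)(z + B)(z + C) - a (z + C) - b (z + B))` with `A = k₁ + μ`, `B = σ₂ + μ`,
`C = σ₃ + μ`, `a = r_A β p k₁`, `b = β k₁ (1 - p)`, so that `R₀ = a / (A B) + b / (A C)`.
If the cubic factor vanished at some `z` with `Re z ≥ 0`, then `|z + A| ≥ A` etc., and taking norms
would give `1 ≤ a / (|z + A| |z + B|) + b / (|z + A| |z + C|) ≤ R₀`, contradicting `R₀ < 1`.
-/

def jacobianDFE (beta rA k1 s2 s3 mu p : ℝ) : Matrix (Fin 5) (Fin 5) ℝ :=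
  !![-mu, 0, -(rA * beta), -beta, 0;
     0, -(k1 + mu), rA * beta, beta, 0;
     0, p * k1, -(s2 + mu), 0, 0;
     0, (1 - p) * k1, 0, -(s3 + mu), 0;
     0, 0, s2, s3, -mu]

theorem det_scalar_sub_jacobianDFE (beta rA k1 s2 s3 mu p : ℝ) (z : ℂ) :
    (Matrix.scalar (Fin 5) z - (jacobianDFE beta rA k1 s2 s3 mu p).map Complex.ofReal).det =
      (z + mu) ^ 2 * ((z + ↑(k1 + mu)) * (z + ↑(s2 + mu)) * (z + ↑(s3 + mu))
        - ↑(rA * beta * p * k1) * (z + ↑(s3 + mu)) - ↑(beta * k1 * (1 - p)) * (z + ↑(s2 + mu))) := by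
  simp [jacobianDFE, Matrix.det_succ_row_zero, Fin.sum_univ_succ, Fin.succAbove]
  ring

theorem Complex.le_norm_add_ofReal_s13 {z : ℂ} (hz : 0 ≤ z.re) (A : ℝ) : A ≤ ‖z + A‖ :=
  calc A ≤ (z + A).re := by simpa using hz
    _ ≤ ‖z + A‖ := Complex.re_le_norm _

theorem Complex.re_neg_of_cubic_eq {A B C a b : ℝ} (hA : 0 < A) (hB : 0 < B) (hC : 0 < C)
    (ha : 0 ≤ a) (hb : 0 ≤ b) (hR : a / (A * B) + b / (A * C) < 1) {z : ℂ}
    (hz : (z + A) * (z + B) * (z + C) = a * (z + C) + b * (z + B)) : z.re < 0 := by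
  by_contra! hre
  set x := ‖z + A‖
  set y := ‖z + B‖
  set w := ‖z + C‖
  have hx : A ≤ x := le_norm_add_ofReal_s13 hre A
  have hy : B ≤ y := le_norm_add_ofReal_s13 hre B
  have hw : C ≤ w := le_norm_add_ofReal_s13 hre C
  have hxyw : x * y * w ≤ a * w + b * y :=
    calc x * y * w = ‖a * (z + C) + b * (z + B)‖ := by rw [← hz, norm_mul, norm_mul]
      _ ≤ ‖(a : ℂ) * (z + C)‖ + ‖(b : ℂ) * (z + B)‖ := norm_add_le _ _
      _ = a * w + b * y := by simp [y, w, abs_of_nonneg ha, abs_of_nonneg hb]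
  have hx0 : 0 < x := hA.trans_le hx
  have hy0 : 0 < y := hB.trans_le hy
  have hw0 : 0 < w := hC.trans_le hw
  refine lt_irrefl (1 : ℝ) ?_
  calc 1 ≤ (a * w + b * y) / (x * y * w) := (one_le_div (by positivity)).2 hxyw
    _ = a / (x * y) + b / (x * w) := by field_simp
    _ ≤ a / (A * B) + b / (A * C) := by gcongr
    _ < 1 := hR

/-- Local asymptotic stability of the DFE of the model without control (3.3):
if R₀ < 1, every complex eigenvalue of the Jacobian J₀ at the disease-free
equilibrium has negative real part. -/
theorem stmt_13
    (beta rA k1 s2 s3 mu p : ℝ)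
    (hbeta : 0 < beta) (hrA : 0 < rA) (hk1 : 0 < k1)
    (hs2 : 0 < s2) (hs3 : 0 < s3) (hmu : 0 < mu) (hp0 : 0 < p) (hp1 : p < 1)
    (J0 : Matrix (Fin 5) (Fin 5) ℝ)
    (hJ0 : J0 = !![-mu, 0, -(rA * beta), -beta, 0;
                   0, -(k1 + mu), rA * beta, beta, 0;
                   0, p * k1, -(s2 + mu), 0, 0;
                   0, (1 - p) * k1, 0, -(s3 + mu), 0;
                   0, 0, s2, s3, -mu])
    (R0 : ℝ)
    (hR0 : R0 = rA * beta * p * k1 / ((k1 + mu) * (s2 + mu))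
      + beta * k1 * (1 - p) / ((k1 + mu) * (s3 + mu)))
    (hR0lt : R0 < 1) :
    ∀ z ∈ spectrum ℂ (J0.map Complex.ofReal), z.re < 0 := by
  intro z hz
  rw [show J0 = jacobianDFE beta rA k1 s2 s3 mu p from hJ0, Matrix.mem_spectrum_iff_isRoot_charpoly,
    Polynomial.IsRoot.def, Matrix.eval_charpoly, det_scalar_sub_jacobianDFE] at hz
  rcases mul_eq_zero.1 hz with hdouble | hcubic
  · have : z = -mu := eq_neg_of_add_eq_zero_left (pow_eq_zero_iff two_ne_zero |>.1 hdouble)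
    simpa [this] using hmu
  · have h1p : 0 < 1 - p := sub_pos.2 hp1
    exact Complex.re_neg_of_cubic_eq (by positivity) (by positivity) (by positivity)
      (by positivity) (by positivity) (hR0 ▸ hR0lt) (by linear_combination hcubic)
end

section
/- Let β, r_A, k1, σ2, σ3, μ be positive reals and p ∈ (0,1). Let J₀ be the 5×5 real matrix with rows (−μ, 0, −r_Aβ, −β, 0), (0, −(k1+μ), r_Aβ, β, 0), (0, p k1, −(σ2+μ), 0, 0), (0, (1−p)k1, 0, −(σ3+μ), 0), (0, 0, σ2, σ3, −μ). If R₀ := r_Aβ p k1/((k1+μ)(σ2+μ)) + β k1(1−p)/((k1+μ)(σ3+μ)) > 1, then J₀ has a real eigenvalue λ* > 0. -/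
/-!
Expanding along the S- and R-columns, which are zero off the diagonal, gives
`det (t - J₀) = (t + μ)² · g t` with
`g t = (t + k₁ + μ)(t + σ₂ + μ)(t + σ₃ + μ) - r_A β p k₁ (t + σ₃ + μ) - β k₁ (1 - p) (t + σ₂ + μ)`,
the characteristic polynomial of the (E, A, I) block. The condition `R₀ > 1` says exactly
`g 0 < 0`, and `g` is a monic cubic, so it has a positive root by the intermediate value theorem.
-/

open Matrix Polynomial

lemma mul_mul_lt_of_one_lt_div_add_div {a b c u v : ℝ} (ha : 0 < a) (hb : 0 < b) (hc : 0 < c)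
    (h : 1 < u / (a * b) + v / (a * c)) : a * b * c < u * c + v * b := by
  have hsum : u / (a * b) + v / (a * c) = (u * c + v * b) / (a * b * c) := by
    field_simp
  rwa [hsum, one_lt_div (by positivity)] at h

lemma exists_pos_root_of_mul_mul_lt {a b c u v : ℝ} (ha : 0 ≤ a) (hb : 0 ≤ b) (hc : 0 ≤ c)
    (hu : 0 ≤ u) (hv : 0 ≤ v) (h : a * b * c < u * c + v * b) :
    ∃ x, 0 < x ∧ (x + a) * (x + b) * (x + c) - u * (x + c) - v * (x + b) = 0 := by
  set g : ℝ → ℝ := fun x => (x + a) * (x + b) * (x + c) - u * (x + c) - v * (x + b)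
  set X := u + v + 1
  have hg0 : g 0 < 0 := by simp only [g]; linarith
  have hgX : 0 < g X := by
    have hbc : 1 ≤ (X + b) * (X + c) := one_le_mul_of_one_le_of_one_le (by linarith) (by linarith)
    have : u * (X + c) + v * (X + b) < (X + a) * (X + b) * (X + c) :=
      calc u * (X + c) + v * (X + b)
          ≤ u * ((X + b) * (X + c)) + v * ((X + b) * (X + c)) := by gcongr <;> nlinarith
        _ < X * ((X + b) * (X + c)) := by nlinarith
        _ ≤ (X + a) * (X + b) * (X + c) := by nlinarith
    simp only [g]
    linarith
  obtain ⟨x, hx, hgx⟩ := intermediate_value_Ioo (by positivity : (0 : ℝ) ≤ X)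
    (by fun_prop : Continuous g).continuousOn ⟨hg0, hgX⟩
  exact ⟨x, hx.1, hgx⟩

lemma eval_charpoly_jacobian_dfe (t beta rA k1 s2 s3 mu p : ℝ) :
    (!![-mu, 0, -(rA * beta), -beta, 0;
        0, -(k1 + mu), rA * beta, beta, 0;
        0, p * k1, -(s2 + mu), 0, 0;
        0, (1 - p) * k1, 0, -(s3 + mu), 0;
        0, 0, s2, s3, -mu] : Matrix (Fin 5) (Fin 5) ℝ).charpoly.eval t
      = (t + mu) ^ 2 * ((t + (k1 + mu)) * (t + (s2 + mu)) * (t + (s3 + mu))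
          - rA * beta * p * k1 * (t + (s3 + mu)) - beta * k1 * (1 - p) * (t + (s2 + mu))) := by
  rw [eval_charpoly, det_succ_column_zero]
  simp [Fin.sum_univ_succ, det_succ_column_zero, Fin.succAbove, diagonal_apply]
  ring

/-- Instability of the DFE of the model without control (3.3): if R₀ > 1, the
Jacobian J₀ at the disease-free equilibrium has a positive real eigenvalue. -/
theorem stmt_14
    (beta rA k1 s2 s3 mu p : ℝ)
    (hbeta : 0 < beta) (hrA : 0 < rA) (hk1 : 0 < k1)
    (hs2 : 0 < s2) (hs3 : 0 < s3) (hmu : 0 < mu) (hp0 : 0 < p) (hp1 : p < 1)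
    (J0 : Matrix (Fin 5) (Fin 5) ℝ)
    (hJ0 : J0 = !![-mu, 0, -(rA * beta), -beta, 0;
                   0, -(k1 + mu), rA * beta, beta, 0;
                   0, p * k1, -(s2 + mu), 0, 0;
                   0, (1 - p) * k1, 0, -(s3 + mu), 0;
                   0, 0, s2, s3, -mu])
    (R0 : ℝ)
    (hR0 : R0 = rA * beta * p * k1 / ((k1 + mu) * (s2 + mu))
      + beta * k1 * (1 - p) / ((k1 + mu) * (s3 + mu)))
    (hR0gt : 1 < R0) :
    ∃ l : ℝ, 0 < l ∧ l ∈ spectrum ℝ J0 := by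
  subst hJ0 hR0
  have hg0 := mul_mul_lt_of_one_lt_div_add_div (by positivity) (by positivity) (by positivity) hR0gt
  have hq : 0 < 1 - p := sub_pos.mpr hp1
  obtain ⟨l, hl, hgl⟩ := exists_pos_root_of_mul_mul_lt (by positivity) (by positivity)
    (by positivity) (by positivity) (by positivity) hg0
  refine ⟨l, hl, mem_spectrum_of_isRoot_charpoly ?_⟩
  rw [IsRoot, eval_charpoly_jacobian_dfe, hgl, mul_zero]
end

section
/- Let β, r_A, k1, σ2, σ3, μ be positive reals and p ∈ (0,1). For λ ∈ ℂ with λ ∉ {−(k1+μ), −(σ2+μ), −(σ3+μ)}, define G₂(λ) = r_Aβ p k1/((λ+k1+μ)(λ+σ2+μ)) + β k1(1−p)/((λ+k1+μ)(λ+σ3+μ)). Then for every λ ∈ ℂ with Re(λ) ≥ 0 one has |G₂(λ)| ≤ G₂(0) = R₀, where R₀ = r_Aβ p k1/((k1+μ)(σ2+μ)) + β k1(1−p)/((k1+μ)(σ3+μ)). -/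
/-!
On the closed right half-plane `‖λ + a‖ ≥ Re (λ + a) ≥ a` for real `a`, so each term
`c / ((λ + a) (λ + b))` of `G₂` with `c ≥ 0` and `a, b > 0` has modulus at most its value
`c / (a b)` at `λ = 0`; the triangle inequality then gives `‖G₂ λ‖ ≤ G₂ 0 = R₀`.
-/

namespace Complex

lemma le_norm_add_ofReal_s15 {z : ℂ} (hz : 0 ≤ z.re) (a : ℝ) : a ≤ ‖z + a‖ :=
  calc a ≤ (z + a).re := by simpa using hz
    _ ≤ ‖z + a‖ := re_le_norm _

lemma add_ofReal_ne_zero_s15 {z : ℂ} (hz : 0 ≤ z.re) {a : ℝ} (ha : 0 < a) : z + a ≠ 0 :=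
  norm_pos_iff.mp (ha.trans_le (le_norm_add_ofReal_s15 hz a))

lemma norm_ofReal_div_mul_le {z : ℂ} (hz : 0 ≤ z.re) {c a b : ℝ} (hc : 0 ≤ c) (ha : 0 < a)
    (hb : 0 < b) : ‖(c : ℂ) / ((z + a) * (z + b))‖ ≤ c / (a * b) := by
  rw [norm_div, norm_mul, norm_real, Real.norm_of_nonneg hc]
  gcongr <;> exact le_norm_add_ofReal_s15 hz _

end Complex

open Complex

/-- For G₂ as in the stability proof for the DFE of the model without control:
for every λ ∈ ℂ with Re(λ) ≥ 0 one has |G₂(λ)| ≤ G₂(0) = R₀. -/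
theorem stmt_15
    (beta rA k1 s2 s3 mu p : ℝ)
    (hbeta : 0 < beta) (hrA : 0 < rA) (hk1 : 0 < k1)
    (hs2 : 0 < s2) (hs3 : 0 < s3) (hmu : 0 < mu) (hp0 : 0 < p) (hp1 : p < 1)
    (G2 : ℂ → ℂ)
    (hG2 : ∀ l : ℂ,
      l ∉ ({-((k1 : ℂ) + mu), -((s2 : ℂ) + mu), -((s3 : ℂ) + mu)} : Set ℂ) →
      G2 l = (↑(rA * beta * p * k1) : ℂ) /
          ((l + (k1 : ℂ) + (mu : ℂ)) * (l + (s2 : ℂ) + (mu : ℂ)))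
        + (↑(beta * k1 * (1 - p)) : ℂ) /
          ((l + (k1 : ℂ) + (mu : ℂ)) * (l + (s3 : ℂ) + (mu : ℂ))))
    (R0 : ℝ)
    (hR0 : R0 = rA * beta * p * k1 / ((k1 + mu) * (s2 + mu))
      + beta * k1 * (1 - p) / ((k1 + mu) * (s3 + mu))) :
    G2 0 = (R0 : ℂ) ∧ ∀ l : ℂ, 0 ≤ l.re → ‖G2 l‖ ≤ R0 := by
  have hk : 0 < k1 + mu := by positivity
  have h2 : 0 < s2 + mu := by positivity
  have h3 : 0 < s3 + mu := by positivity
  have hq : 0 ≤ 1 - p := sub_nonneg.mpr hp1.le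
  have hdom : ∀ l : ℂ, 0 ≤ l.re →
      l ∉ ({-((k1 : ℂ) + mu), -((s2 : ℂ) + mu), -((s3 : ℂ) + mu)} : Set ℂ) := by
    intro l hl
    simp only [Set.mem_insert_iff, Set.mem_singleton_iff, eq_neg_iff_add_eq_zero,
      ← ofReal_add, not_or]
    exact ⟨add_ofReal_ne_zero_s15 hl hk, add_ofReal_ne_zero_s15 hl h2, add_ofReal_ne_zero_s15 hl h3⟩
  refine ⟨by rw [hG2 0 (hdom 0 le_rfl), hR0]; push_cast; ring, fun l hl => ?_⟩
  rw [hG2 l (hdom l hl), hR0]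
  simp only [add_assoc, ← ofReal_add]
  exact (norm_add_le _ _).trans <| add_le_add
    (norm_ofReal_div_mul_le hl (by positivity) hk h2)
    (norm_ofReal_div_mul_le hl (by positivity) hk h3)
end
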